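/- arXiv:2509.15386 — 11 statements merged into one kernel-verified Lean document; each statement's English description precedes it below -/
import Mathlib

section
/- For the complete graph K_n with n ≥ 2, GC(K_n) = 2. -/
open SimpleGraph Finset

variable {V : Type*} [Fintype V] [DecidableEq V]

/-- `S` is a dominating set of the graph `G`. -/
def IsDomSet (G : SimpleGraph V) (S : Finset V) : Prop :=
  ∀ v : V, v ∈ S ∨ ∃ u ∈ S, G.Adj u v

/-- `S` is a global dominating set of `G`: it dominates both `G` and its complement. -/
def IsGlobalDomSet (G : SimpleGraph V) (S : Finset V) : Prop :=
  IsDomSet G S ∧ IsDomSet Gᶜ S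

/-- Disjoint sets `A` and `B` form a global coalition in `G`. -/
def IsGlobalCoalition (G : SimpleGraph V) (A B : Finset V) : Prop :=
  Disjoint A B ∧ ¬ IsGlobalDomSet G A ∧ ¬ IsGlobalDomSet G B ∧ IsGlobalDomSet G (A ∪ B)

/-- `π` is a global coalition partition (gc-partition) of `G`. -/
def IsGCPartition (G : SimpleGraph V) (π : Finpartition (Finset.univ : Finset V)) : Prop :=
  ∀ A ∈ π.parts, ¬ IsGlobalDomSet G A ∧ ∃ B ∈ π.parts, B ≠ A ∧ IsGlobalCoalition G A B

/-- The global coalition number `GC(G)`: the maximum number of parts in a gc-partition of `G`. -/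
noncomputable def globalCoalitionNumber (G : SimpleGraph V) : ℕ :=
  sSup {n | ∃ π : Finpartition (Finset.univ : Finset V), IsGCPartition G π ∧ π.parts.card = n}

/-! In `K_n` a set is globally dominating only if it is all of `V`: a vertex outside it has no
neighbour in the complement graph. So two parts form a global coalition exactly when they cover
`V`, which forces a gc-partition to have exactly two parts, and any split of `V` into two nonempty
sets is one. -/

namespace Finpartition

variable {α : Type*} [DecidableEq α] {s : Finset α}

lemma parts_eq_pair_of_union_eq (P : Finpartition s) {A B : Finset α} (hA : A ∈ P.parts)
    (hB : B ∈ P.parts) (hAB : A ∪ B = s) : P.parts = {A, B} := by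
  ext C
  refine ⟨fun hC ↦ ?_, fun hC ↦ ?_⟩
  · obtain ⟨x, hxC⟩ := P.nonempty_of_mem_parts hC
    have hxAB : x ∈ A ∪ B := hAB ▸ P.subset hC hxC
    rcases mem_union.mp hxAB with hxA | hxB
    · simp [P.eq_of_mem_parts hC hA hxC hxA]
    · simp [P.eq_of_mem_parts hC hB hxC hxB]
  · rcases mem_insert.mp hC with rfl | hC
    · exact hA
    · exact mem_singleton.mp hC ▸ hB

lemma ne_of_mem_parts_of_ne (P : Finpartition s) {A B : Finset α} (hA : A ∈ P.parts)
    (hB : B ∈ P.parts) (hAB : A ≠ B) : A ≠ s := by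
  rintro rfl
  exact P.ne_bot hB ((P.disjoint hA hB hAB).eq_bot_of_ge (P.subset hB))

lemma exists_card_parts_eq_two (hs : 1 < #s) : ∃ P : Finpartition s, #P.parts = 2 := by
  obtain ⟨a, ha⟩ := card_pos.mp (zero_lt_one.trans hs)
  have hrest : s.erase a ≠ ∅ := by
    rw [Ne, ← card_eq_zero, card_erase_of_mem ha]
    omega
  have hcover : {a} ⊔ s.erase a = s := insert_erase ha
  exact ⟨(indiscrete (singleton_ne_empty a)).extend hrest (by simp) hcover, by
    rw [card_extend, indiscrete_parts, card_singleton]⟩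

end Finpartition

omit [DecidableEq V] in
lemma isGlobalDomSet_top_iff (S : Finset V) : IsGlobalDomSet (⊤ : SimpleGraph V) S ↔ S = univ := by
  refine ⟨fun ⟨_, hcompl⟩ ↦ eq_univ_of_forall fun v ↦ ?_, fun hS ↦ ?_⟩
  · rcases hcompl v with hv | ⟨u, -, huv⟩
    · exact hv
    · simp at huv
  · subst hS
    exact ⟨fun v ↦ .inl (mem_univ v), fun v ↦ .inl (mem_univ v)⟩

lemma isGCPartition_top_iff [Nonempty V] (π : Finpartition (univ : Finset V)) :
    IsGCPartition (⊤ : SimpleGraph V) π ↔ #π.parts = 2 := by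
  constructor
  · intro hπ
    obtain ⟨A, hA⟩ := π.parts_nonempty univ_nonempty.ne_empty
    obtain ⟨-, B, hB, hBA, -, -, -, hAB⟩ := hπ A hA
    rw [π.parts_eq_pair_of_union_eq hA hB ((isGlobalDomSet_top_iff _).mp hAB)]
    exact card_pair hBA.symm
  · intro hπ C hC
    obtain ⟨D, hD, hDC⟩ := exists_mem_ne (hπ ▸ one_lt_two) C
    have hpair : π.parts = {C, D} :=
      (eq_of_subset_of_card_le (by simp [insert_subset_iff, hC, hD])
        (by rw [hπ, card_pair hDC.symm])).symm
    have hcover : C ∪ D = univ := by simpa [hpair] using π.sup_parts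
    have hC_ne : ¬ IsGlobalDomSet ⊤ C := by
      rw [isGlobalDomSet_top_iff]; exact π.ne_of_mem_parts_of_ne hC hD hDC.symm
    have hD_ne : ¬ IsGlobalDomSet ⊤ D := by
      rw [isGlobalDomSet_top_iff]; exact π.ne_of_mem_parts_of_ne hD hC hDC
    exact ⟨hC_ne, D, hD, hDC, π.disjoint hC hD hDC.symm, hC_ne, hD_ne,
      (isGlobalDomSet_top_iff _).mpr hcover⟩

lemma globalCoalitionNumber_top (hV : 1 < Fintype.card V) :
    globalCoalitionNumber (⊤ : SimpleGraph V) = 2 := by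
  have : Nonempty V := Fintype.card_pos_iff.mp (zero_lt_one.trans hV)
  have hset :
      {n | ∃ π : Finpartition (univ : Finset V), IsGCPartition ⊤ π ∧ #π.parts = n} = {2} := by
    ext n
    simp only [isGCPartition_top_iff, Set.mem_ofPred_eq, Set.mem_singleton_iff]
    refine ⟨fun ⟨π, h2, hn⟩ ↦ hn ▸ h2, fun hn ↦ ?_⟩
    obtain ⟨π, hπ⟩ := Finpartition.exists_card_parts_eq_two (s := (univ : Finset V)) hV
    exact ⟨π, hπ, hπ.trans hn.symm⟩
  rw [globalCoalitionNumber, hset, csSup_singleton]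

theorem gc_completeGraph (n : ℕ) (hn : 2 ≤ n) :
    globalCoalitionNumber (⊤ : SimpleGraph (Fin n)) = 2 :=
  globalCoalitionNumber_top (by rwa [Fintype.card_fin])
end

section
/- For the complete bipartite graph K_{n,m} with n, m ≥ 1, GC(K_{n,m}) = n + m. -/
open SimpleGraph Finset

variable {V : Type*} [Fintype V] [DecidableEq V]

/-!
A singleton `{v}` is never a global dominating set once there is another vertex `w`, since `w`
cannot be adjacent to `v` in both `G` and `Gᶜ`. Hence the partition into singletons is a
gc-partition as soon as every vertex has a partner `w` with `{v, w}` globally dominating, and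
then `GC(G) = |V|`. In `K_{n,m}` any two vertices from opposite sides form such a pair: together
they dominate `K_{n,m}`, and each side is a clique of the complement.
-/

theorem not_isGlobalDomSet_singleton {α : Type*} (G : SimpleGraph α) {v w : α} (hwv : w ≠ v) :
    ¬ IsGlobalDomSet G {v} := by
  rintro ⟨hG, hGc⟩
  have hw : w ∉ ({v} : Finset α) := by simpa using hwv
  obtain ⟨_, hu, hadj⟩ := (hG w).resolve_left hw
  obtain ⟨_, hu', hadj'⟩ := (hGc w).resolve_left hw
  rw [mem_singleton] at hu hu'
  subst hu hu'
  exact (compl_adj G _ _).1 hadj' |>.2 hadj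

theorem isGCPartition_bot (G : SimpleGraph V)
    (hpair : ∀ v, ∃ w, w ≠ v ∧ IsGlobalDomSet G {v, w}) : IsGCPartition G ⊥ := by
  have hsingle (v : V) : ¬ IsGlobalDomSet G {v} :=
    let ⟨_, hwv, _⟩ := hpair v
    not_isGlobalDomSet_singleton G hwv
  intro A hA
  obtain ⟨v, -, rfl⟩ := Finpartition.mem_bot_iff.1 hA
  obtain ⟨w, hwv, hdom⟩ := hpair v
  refine ⟨hsingle v, {w}, Finpartition.mem_bot_iff.2 ⟨w, mem_univ w, rfl⟩,
    by simpa using hwv, by simpa using hwv.symm, hsingle v, hsingle w, hdom⟩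

theorem globalCoalitionNumber_eq_card {G : SimpleGraph V} (h : IsGCPartition G ⊥) :
    globalCoalitionNumber G = Fintype.card V := by
  refine IsGreatest.csSup_eq ⟨⟨⊥, h, by simp⟩, ?_⟩
  rintro _ ⟨π, -, rfl⟩
  simpa using π.card_parts_le_card

theorem isGlobalDomSet_completeBipartiteGraph_pair {α β : Type*} [DecidableEq α] [DecidableEq β]
    (a : α) (b : β) :
    IsGlobalDomSet (completeBipartiteGraph α β) {Sum.inl a, Sum.inr b} := by
  constructor
  · rintro (x | y)
    · exact .inr ⟨.inr b, by simp, by simp⟩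
    · exact .inr ⟨.inl a, by simp, by simp⟩
  · rintro (x | y)
    · obtain rfl | hxa := eq_or_ne x a
      · exact .inl (by simp)
      · exact .inr ⟨.inl a, by simp, by simp [hxa.symm]⟩
    · obtain rfl | hyb := eq_or_ne y b
      · exact .inl (by simp)
      · exact .inr ⟨.inr b, by simp, by simp [hyb.symm]⟩

theorem gc_completeBipartiteGraph (n m : ℕ) (hn : 1 ≤ n) (hm : 1 ≤ m) :
    globalCoalitionNumber (completeBipartiteGraph (Fin n) (Fin m)) = n + m := by
  have hpair (v : Fin n ⊕ Fin m) : ∃ w, w ≠ v ∧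
      IsGlobalDomSet (completeBipartiteGraph (Fin n) (Fin m)) {v, w} := by
    rcases v with a | b
    · exact ⟨.inr ⟨0, hm⟩, Sum.inr_ne_inl, isGlobalDomSet_completeBipartiteGraph_pair a _⟩
    · refine ⟨.inl ⟨0, hn⟩, Sum.inl_ne_inr, ?_⟩
      rw [pair_comm]
      exact isGlobalDomSet_completeBipartiteGraph_pair _ b
  rw [globalCoalitionNumber_eq_card (isGCPartition_bot _ hpair)]
  simp
end

section
/- Let G = K_{n₁,n₂,…,n_m} be a complete m-partite graph with partite sets V₁, V₂, …, V_m where n₁ ≥ n₂ ≥ ⋯ ≥ n_m and m ≥ 2. Then GC(G) ≥ n₁ + n_m. -/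
open SimpleGraph Finset

variable {V : Type*} [Fintype V] [DecidableEq V]

/-!
Take the vertices of the class `i₀` as singleton parts, and cut the remaining vertices into
`b` layers, the `t`-th layer taking from every other class the vertices of index `t` modulo `b`;
this needs every other class to have at least `b` vertices. With at least two classes, a set is
globally dominating in a complete multipartite graph iff it meets every class. So no singleton
(it misses the other classes) and no layer (it misses class `i₀`) is globally dominating, while
a singleton together with any layer meets every class: this is a gc-partition with `n i₀ + b`
parts.
-/

namespace Finpartition

variable {α κ : Type*} [Fintype α] [DecidableEq α] [Fintype κ] [DecidableEq κ]

def ofSurjective (c : α → κ) (hc : Function.Surjective c) : Finpartition (univ : Finset α) where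
  parts := univ.image fun k => ({a | c a = k} : Finset α)
  supIndep := by
    rw [supIndep_iff_pairwiseDisjoint]
    simp only [Set.PairwiseDisjoint, Set.Pairwise, coe_image, coe_univ, Set.image_univ,
      Set.mem_range, forall_exists_index, forall_apply_eq_imp_iff]
    intro k l hne
    refine disjoint_filter.2 fun a _ hk hl => hne ?_
    simp only [← hk, ← hl]
  sup_parts := eq_univ_of_forall fun a =>
    mem_sup.2 ⟨_, mem_image_of_mem _ (mem_univ (c a)), by simp⟩
  bot_notMem := by
    simp only [bot_eq_empty, mem_image, mem_univ, true_and, not_exists]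
    intro k hk
    obtain ⟨a, rfl⟩ := hc k
    simpa using congrArg (a ∈ ·) hk

variable {c : α → κ} {hc : Function.Surjective c}

lemma mem_ofSurjective_parts {A : Finset α} :
    A ∈ (ofSurjective c hc).parts ↔ ∃ k, ({a | c a = k} : Finset α) = A := by
  simp [ofSurjective]

lemma card_ofSurjective_parts : #(ofSurjective c hc).parts = Fintype.card κ := by
  refine card_image_of_injective _ fun k l hkl => ?_
  obtain ⟨a, rfl⟩ := hc k
  simpa using congrArg (a ∈ ·) hkl

end Finpartition

lemma le_globalCoalitionNumber {G : SimpleGraph V} {π : Finpartition (univ : Finset V)}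
    (hπ : IsGCPartition G π) : #π.parts ≤ globalCoalitionNumber G :=
  le_csSup ⟨Fintype.card V, by rintro _ ⟨π', -, rfl⟩; exact π'.card_parts_le_card⟩ ⟨π, hπ, rfl⟩

theorem card_le_globalCoalitionNumber_of_surjective {κ : Type*} [Fintype κ] [DecidableEq κ]
    (G : SimpleGraph V) (c : V → κ) (hc : Function.Surjective c)
    (hnot : ∀ k, ¬ IsGlobalDomSet G ({v | c v = k} : Finset V))
    (hpair : ∀ k, ∃ l ≠ k,
      IsGlobalDomSet G (({v | c v = k} : Finset V) ∪ ({v | c v = l} : Finset V))) :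
    Fintype.card κ ≤ globalCoalitionNumber G := by
  rw [← Finpartition.card_ofSurjective_parts (hc := hc)]
  refine le_globalCoalitionNumber fun A hA => ?_
  obtain ⟨k, rfl⟩ := Finpartition.mem_ofSurjective_parts.1 hA
  obtain ⟨l, hlk, hkl⟩ := hpair k
  have hdisj : Disjoint ({v | c v = k} : Finset V) ({v | c v = l} : Finset V) :=
    disjoint_filter.2 fun v _ hk hl => hlk (hl.symm.trans hk)
  refine ⟨hnot k, _, Finpartition.mem_ofSurjective_parts.2 ⟨l, rfl⟩, fun he => ?_,
    hdisj, hnot k, hnot l, hkl⟩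
  obtain ⟨v, rfl⟩ := hc l
  have hv : v ∈ ({a | c a = k} : Finset V) := he ▸ by simp
  exact hlk (by simpa using hv)

section CompleteMultipartite

variable {ι : Type*} [DecidableEq ι]

lemma isGlobalDomSet_completeMultipartiteGraph_iff [Fintype ι] {W : ι → Type*}
    [∀ i, Fintype (W i)] [∀ i, DecidableEq (W i)] [Nontrivial ι] [∀ i, Nonempty (W i)]
    {S : Finset (Σ i, W i)} :
    IsGlobalDomSet (completeMultipartiteGraph W) S ↔ ∀ i, ∃ v ∈ S, v.1 = i := by
  constructor
  · rintro ⟨-, hdom⟩ i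
    obtain ⟨x⟩ : Nonempty (W i) := inferInstance
    rcases hdom ⟨i, x⟩ with hx | ⟨v, hv, hadj⟩
    · exact ⟨_, hx, rfl⟩
    · exact ⟨v, hv, by simpa using ((compl_adj _ _ _).1 hadj).2⟩
  · intro h
    refine ⟨fun w => ?_, fun w => ?_⟩
    · obtain ⟨i, hi⟩ := exists_ne w.1
      obtain ⟨v, hv, rfl⟩ := h i
      exact Or.inr ⟨v, hv, hi⟩
    · obtain ⟨v, hv, hvw⟩ := h w.1
      by_cases h : v = w
      · exact Or.inl (h ▸ hv)
      · exact Or.inr ⟨v, hv, by simp [compl_adj, h, hvw]⟩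

variable {n : ι → ℕ}

def layerColoring (i₀ : ι) {b : ℕ} (hb : 0 < b) (v : Σ i, Fin (n i)) : Fin (n i₀) ⊕ Fin b :=
  if h : v.1 = i₀ then .inl (Fin.cast (congrArg n h) v.2) else .inr ⟨v.2 % b, Nat.mod_lt _ hb⟩

variable {i₀ : ι} {b : ℕ} {hb : 0 < b}

lemma fst_eq_of_layerColoring_eq_inl {v : Σ i, Fin (n i)} {j : Fin (n i₀)}
    (hv : layerColoring i₀ hb v = .inl j) : v.1 = i₀ := by
  by_contra h
  simp [layerColoring, h] at hv

lemma fst_ne_of_layerColoring_eq_inr {v : Σ i, Fin (n i)} {t : Fin b}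
    (hv : layerColoring i₀ hb v = .inr t) : v.1 ≠ i₀ := by
  intro h
  simp [layerColoring, h] at hv

lemma layerColoring_mk_of_ne {i : ι} (hi : i ≠ i₀) (t : Fin b) (hbi : b ≤ n i) :
    layerColoring i₀ hb ⟨i, ⟨t, t.2.trans_le hbi⟩⟩ = .inr t := by
  simp [layerColoring, hi, Nat.mod_eq_of_lt t.2]

lemma layerColoring_surjective [Nontrivial ι] (hbn : ∀ i ≠ i₀, b ≤ n i) :
    Function.Surjective (layerColoring (n := n) i₀ hb) := by
  rintro (j | t)
  · exact ⟨⟨i₀, j⟩, by simp [layerColoring]⟩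
  · obtain ⟨i, hi⟩ := exists_ne i₀
    exact ⟨_, layerColoring_mk_of_ne hi t (hbn i hi)⟩

theorem add_le_globalCoalitionNumber_completeMultipartiteGraph [Fintype ι] [Nontrivial ι]
    (i₀ : ι) (h₀ : 0 < n i₀) (hb : 0 < b) (hbn : ∀ i ≠ i₀, b ≤ n i) :
    n i₀ + b ≤ globalCoalitionNumber (completeMultipartiteGraph fun i => Fin (n i)) := by
  have : ∀ i, Nonempty (Fin (n i)) := fun i => Fin.pos_iff_nonempty.1 <|
    if hi : i = i₀ then hi ▸ h₀ else hb.trans_le (hbn i hi)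
  set c := layerColoring (n := n) i₀ hb
  have hunion (j : Fin (n i₀)) (t : Fin b) : IsGlobalDomSet (completeMultipartiteGraph _)
      (({v | c v = .inl j} : Finset _) ∪ ({v | c v = .inr t} : Finset _)) := by
    refine isGlobalDomSet_completeMultipartiteGraph_iff.2 fun i => ?_
    by_cases hi : i = i₀
    · subst hi
      exact ⟨⟨i, j⟩, by simp [c, layerColoring], rfl⟩
    · exact ⟨⟨i, ⟨t, t.2.trans_le (hbn i hi)⟩⟩,
        by simp [c, layerColoring_mk_of_ne hi t (hbn i hi)], rfl⟩
  have hnot : ∀ k, ¬ IsGlobalDomSet (completeMultipartiteGraph _) ({v | c v = k} : Finset _) := by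
    rintro (j | t) h <;> rw [isGlobalDomSet_completeMultipartiteGraph_iff] at h
    · obtain ⟨i, hi⟩ := exists_ne i₀
      obtain ⟨v, hv, rfl⟩ := h i
      exact hi (fst_eq_of_layerColoring_eq_inl (mem_filter.1 hv).2)
    · obtain ⟨v, hv, hv₀⟩ := h i₀
      exact fst_ne_of_layerColoring_eq_inr (mem_filter.1 hv).2 hv₀
  have hpair : ∀ k, ∃ l ≠ k, IsGlobalDomSet (completeMultipartiteGraph _)
      (({v | c v = k} : Finset _) ∪ ({v | c v = l} : Finset _)) := by
    rintro (j | t)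
    · exact ⟨.inr ⟨0, hb⟩, by simp, hunion j _⟩
    · exact ⟨.inl ⟨0, h₀⟩, by simp, by rw [union_comm]; exact hunion _ t⟩
  simpa using
    card_le_globalCoalitionNumber_of_surjective _ c (layerColoring_surjective hbn) hnot hpair

end CompleteMultipartite

theorem gc_completeMultipartiteGraph (m : ℕ) (hm : 2 ≤ m) (n : Fin m → ℕ)
    (hpos : ∀ i, 1 ≤ n i) (hanti : Antitone n) :
    n ⟨0, by omega⟩ + n ⟨m - 1, by omega⟩ ≤
      globalCoalitionNumber (completeMultipartiteGraph (fun i : Fin m => Fin (n i))) := by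
  have : Nontrivial (Fin m) := Fin.nontrivial_iff_two_le.2 hm
  exact add_le_globalCoalitionNumber_completeMultipartiteGraph _ (hpos _) (hpos _)
    fun i _ => hanti (Fin.le_iff_val_le_val.2 (Nat.le_sub_one_of_lt i.2))
end

section
/- For the wheel graph W_n with n ≥ 3, GC(W_n) = n − 1. -/
open SimpleGraph Finset

variable {V : Type*} [Fintype V] [DecidableEq V]

/-- The wheel graph `W n`: a cycle `C n` together with a hub vertex (`none`) adjacent to all
cycle vertices. -/
def wheelGraph (n : ℕ) : SimpleGraph (Option (Fin n)) :=
  SimpleGraph.fromRel fun u v =>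
    (u = none ∧ v ≠ none) ∨
    (∃ i j : Fin n, u = some i ∧ v = some j ∧ (cycleGraph n).Adj i j)

namespace GCW
variable {m : ℕ}

lemma wheel_adj_some_none (i : Fin (m+3)) : (wheelGraph (m+3)).Adj (some i) none := by
  simp [wheelGraph, fromRel_adj]

lemma wheel_adj_none_some (i : Fin (m+3)) : (wheelGraph (m+3)).Adj none (some i) :=
  (wheel_adj_some_none i).symm

lemma wheel_adj_some_some {i j : Fin (m+3)} :
    (wheelGraph (m+3)).Adj (some i) (some j) ↔ (cycleGraph (m+3)).Adj i j := by
  simp only [wheelGraph, fromRel_adj]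
  constructor
  · rintro ⟨hne, h | h⟩
    · rcases h with ⟨h, -⟩ | ⟨a, b, ha, hb, hadj⟩
      · exact absurd h (by simp)
      · obtain rfl : a = i := by simpa using ha.symm
        obtain rfl : b = j := by simpa using hb.symm
        exact hadj
    · rcases h with ⟨h, -⟩ | ⟨a, b, ha, hb, hadj⟩
      · exact absurd h (by simp)
      · obtain rfl : a = j := by simpa using ha.symm
        obtain rfl : b = i := by simpa using hb.symm
        exact hadj.symm
  · intro h
    exact ⟨by simpa using h.ne, Or.inl (Or.inr ⟨i, j, rfl, rfl, h⟩)⟩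

def Good (S : Finset (Option (Fin (m+3)))) : Prop :=
  none ∈ S ∧ ∀ v : Fin (m+3), some v ∈ S ∨
    ∃ u : Fin (m+3), some u ∈ S ∧ u ≠ v ∧ ¬ (cycleGraph (m+3)).Adj u v

lemma glob_iff {S : Finset (Option (Fin (m+3)))} :
    IsGlobalDomSet (wheelGraph (m+3)) S ↔ Good S := by
  constructor
  · rintro ⟨-, hc⟩
    have hnone : none ∈ S := by
      rcases hc none with h | ⟨u, hu, hadj⟩
      · exact h
      · rw [compl_adj] at hadj
        match u with
        | none => exact absurd rfl hadj.1
        | some i => exact absurd (wheel_adj_some_none i) hadj.2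
    refine ⟨hnone, fun v => ?_⟩
    rcases hc (some v) with h | ⟨u, hu, hadj⟩
    · exact Or.inl h
    · right
      rw [compl_adj] at hadj
      match u with
      | none => exact absurd (wheel_adj_none_some v) hadj.2
      | some w =>
        exact ⟨w, hu, by simpa using hadj.1, fun hcyc => hadj.2 (wheel_adj_some_some.mpr hcyc)⟩
  · rintro ⟨hnone, h⟩
    constructor
    · intro v
      match v with
      | none => exact Or.inl hnone
      | some i => exact Or.inr ⟨none, hnone, wheel_adj_none_some i⟩
    · intro v
      match v with
      | none => exact Or.inl hnone
      | some i =>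
        rcases h i with hi | ⟨u, hu, hne, hncyc⟩
        · exact Or.inl hi
        · refine Or.inr ⟨some u, hu, ?_⟩
          rw [compl_adj]
          exact ⟨by simpa using hne, fun hadj => hncyc (wheel_adj_some_some.mp hadj)⟩

lemma notGlobal_of_none_not_mem {S : Finset (Option (Fin (m+3)))} (h : none ∉ S) :
    ¬ IsGlobalDomSet (wheelGraph (m+3)) S :=
  fun hg => h (glob_iff.mp hg).1

lemma global_of_three {S : Finset (Option (Fin (m+3)))} {a b c : Fin (m+3)}
    (hab : a ≠ b) (hac : a ≠ c) (hbc : b ≠ c)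
    (ha : some a ∈ S) (hb : some b ∈ S) (hc : some c ∈ S) (h0 : none ∈ S) :
    IsGlobalDomSet (wheelGraph (m+3)) S := by
  rw [glob_iff]
  refine ⟨h0, fun v => ?_⟩
  by_cases hv : some v ∈ S
  · exact Or.inl hv
  right
  have hva : a ≠ v := fun h => hv (h ▸ ha)
  have hvb : b ≠ v := fun h => hv (h ▸ hb)
  have hvc : c ≠ v := fun h => hv (h ▸ hc)
  by_cases h1 : (cycleGraph (m+3)).Adj a v
  · by_cases h2 : (cycleGraph (m+3)).Adj b v
    · refine ⟨c, hc, hvc, fun h3 => ?_⟩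
      rw [cycleGraph_adj] at h1 h2 h3
      rcases h1 with h1 | h1 <;> rcases h2 with h2 | h2 <;> rcases h3 with h3 | h3 <;>
        first
          | exact hab (sub_left_inj.mp (h1.trans h2.symm))
          | exact hab (sub_right_inj.mp (h1.trans h2.symm))
          | exact hac (sub_left_inj.mp (h1.trans h3.symm))
          | exact hac (sub_right_inj.mp (h1.trans h3.symm))
          | exact hbc (sub_left_inj.mp (h2.trans h3.symm))
          | exact hbc (sub_right_inj.mp (h2.trans h3.symm))
    · exact ⟨b, hb, hvb, h2⟩
  · exact ⟨a, ha, hva, h1⟩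

lemma notGlobal_sub {S : Finset (Option (Fin (m+3)))} (b : Fin (m+3))
    (hS : S ⊆ {none, some b, some (b+2)}) :
    ¬ IsGlobalDomSet (wheelGraph (m+3)) S := by
  rw [glob_iff]
  rintro ⟨-, h⟩
  rcases h (b+1) with h1 | ⟨u, hu, hne, hncyc⟩
  · have := hS h1
    simp only [mem_insert, mem_singleton, Option.some.injEq] at this
    rcases this with h' | h' | h'
    · exact Option.some_ne_none _ h'
    · exact absurd h' (by simp)
    · exact absurd h' (by simp [Fin.ext_iff, Nat.mod_eq_of_lt (show 2 < m+3 by omega)])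
  · have := hS hu
    simp only [mem_insert, mem_singleton, Option.some.injEq] at this
    rcases this with h' | h' | h'
    · exact Option.some_ne_none _ h'
    · subst h'
      exact hncyc (cycleGraph_adj.mpr (Or.inr (add_sub_cancel_left _ _)))
    · subst h'
      exact hncyc (cycleGraph_adj.mpr (Or.inl (by simp [sub_eq_iff_eq_add', add_assoc]; congr 1)))

def Hset (m : ℕ) : Finset (Option (Fin (m+3))) := {none, some 0, some 2}

def gparts (m : ℕ) : Finset (Finset (Option (Fin (m+3)))) :=
  insert (Hset m) ((univ.filter (fun j : Fin (m+3) => j ≠ 0 ∧ j ≠ 2)).image (fun j => {some j}))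

lemma two_ne_zero' : (2 : Fin (m+3)) ≠ 0 := by simp [Fin.ext_iff, Nat.mod_eq_of_lt (show 2 < m+3 by omega)]

lemma mem_gparts {A : Finset (Option (Fin (m+3)))} :
    A ∈ gparts m ↔ A = Hset m ∨ ∃ j : Fin (m+3), j ≠ 0 ∧ j ≠ 2 ∧ A = {some j} := by
  simp only [gparts, mem_insert, mem_image, mem_filter, mem_univ, true_and]
  constructor
  · rintro (h | ⟨j, ⟨hj0, hj2⟩, rfl⟩)
    · exact Or.inl h
    · exact Or.inr ⟨j, hj0, hj2, rfl⟩
  · rintro (h | ⟨j, hj0, hj2, rfl⟩)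
    · exact Or.inl h
    · exact Or.inr ⟨j, ⟨hj0, hj2⟩, rfl⟩

def gpartition (m : ℕ) : Finpartition (univ : Finset (Option (Fin (m+3)))) where
  parts := gparts m
  supIndep := by
    rw [Finset.supIndep_iff_pairwiseDisjoint]
    intro A hA B hB hne
    simp only [Set.mem_setOf_eq, Finset.mem_coe, mem_gparts] at hA hB
    rcases hA with rfl | ⟨i, hi0, hi2, rfl⟩ <;> rcases hB with rfl | ⟨j, hj0, hj2, rfl⟩
    · exact absurd rfl hne
    · simp only [Function.onFun, id_eq, Finset.disjoint_left, Hset]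
      rintro x hx hx'
      simp only [mem_insert, mem_singleton] at hx hx'
      subst hx'
      rcases hx with h | h | h
      · exact Option.some_ne_none _ h
      · exact hj0 (Option.some.inj h)
      · exact hj2 (Option.some.inj h)
    · simp only [Function.onFun, id_eq, Finset.disjoint_left, Hset]
      rintro x hx hx'
      simp only [mem_singleton] at hx
      subst hx
      simp only [mem_insert, mem_singleton] at hx'
      rcases hx' with h | h | h
      · exact Option.some_ne_none _ h
      · exact hi0 (Option.some.inj h)
      · exact hi2 (Option.some.inj h)
    · simp only [Function.onFun, id_eq, Finset.disjoint_left]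
      rintro x hx hx'
      simp only [mem_singleton] at hx hx'
      subst hx
      exact hne (by rw [Option.some.inj hx'])
  sup_parts := by
    apply le_antisymm (le_top.trans_eq (by simp))
    · intro x _
      rw [Finset.mem_sup]
      match x with
      | none => exact ⟨Hset m, by rw [mem_gparts]; exact Or.inl rfl, by simp [Hset]⟩
      | some j =>
        by_cases hj0 : j = 0
        · exact ⟨Hset m, by rw [mem_gparts]; exact Or.inl rfl, by simp [Hset, hj0]⟩
        by_cases hj2 : j = 2
        · exact ⟨Hset m, by rw [mem_gparts]; exact Or.inl rfl, by simp [Hset, hj2]⟩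
        · exact ⟨{some j}, by rw [mem_gparts]; exact Or.inr ⟨j, hj0, hj2, rfl⟩, by simp⟩
  bot_notMem := by
    rw [show (⊥ : Finset (Option (Fin (m+3)))) = ∅ from rfl, mem_gparts]
    rintro (h | ⟨j, -, -, h⟩)
    · exact absurd (h ▸ (by simp [Hset] : none ∈ Hset m)) (notMem_empty _)
    · exact absurd (h ▸ (by simp : some j ∈ ({some j} : Finset _))) (notMem_empty _)

lemma card_gparts : (gparts m).card = m + 2 := by
  rw [gparts, card_insert_of_notMem, card_image_of_injective _ (fun a b h => by simpa using h)]
  · have : (univ.filter (fun j : Fin (m+3) => j ≠ 0 ∧ j ≠ 2)) = univ \ {0, 2} := by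
      ext j; simp [and_comm]
    rw [this, card_sdiff_of_subset (by simp)]
    rw [card_insert_of_notMem (by simp [two_ne_zero'.symm]), card_singleton]
    simp
  · intro h
    simp only [mem_image] at h
    obtain ⟨j, -, hj⟩ := h
    have h3 : (Hset m).card = 3 := by
      rw [Hset, card_insert_of_notMem (by simp),
        card_insert_of_notMem (by simp [two_ne_zero'.symm]), card_singleton]
    have h1 : (Hset m).card = 1 := by rw [← hj, card_singleton]
    omega

lemma one_ne_zero' : (1 : Fin (m+3)) ≠ 0 := by simp [Fin.ext_iff]
lemma one_ne_two' : (1 : Fin (m+3)) ≠ 2 := by simp [Fin.ext_iff, Nat.mod_eq_of_lt (show 2 < m+3 by omega)]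

lemma notGlobal_Hset : ¬ IsGlobalDomSet (wheelGraph (m+3)) (Hset m) := by
  apply notGlobal_sub 0
  intro x hx
  simp only [Hset, mem_insert, mem_singleton] at hx ⊢
  rcases hx with h | h | h
  · exact Or.inl h
  · exact Or.inr (Or.inl h)
  · refine Or.inr (Or.inr ?_)
    rw [h, zero_add]

lemma isGC_gpartition : IsGCPartition (wheelGraph (m+3)) (gpartition m) := by
  intro A hA
  have hH : Hset m ∈ (gpartition m).parts := mem_gparts.mpr (Or.inl rfl)
  rw [show (gpartition m).parts = gparts m from rfl, mem_gparts] at hA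
  have h02 : (0 : Fin (m+3)) ≠ 2 := two_ne_zero'.symm
  rcases hA with rfl | ⟨j, hj0, hj2, rfl⟩
  · refine ⟨notGlobal_Hset, {some 1}, ?_, ?_, ?_, notGlobal_Hset, ?_, ?_⟩
    · exact mem_gparts.mpr (Or.inr ⟨1, one_ne_zero', one_ne_two', rfl⟩)
    · intro h
      have : none ∈ ({some 1} : Finset (Option (Fin (m+3)))) := h ▸ (by simp [Hset])
      simp at this
    · simp only [Finset.disjoint_left, Hset]
      rintro x hx
      simp only [mem_insert, mem_singleton] at hx ⊢
      rcases hx with h | h | h <;> subst h <;> simp [Fin.ext_iff, Nat.mod_eq_of_lt (show 2 < m+3 by omega)]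
    · exact notGlobal_of_none_not_mem (by simp)
    · exact global_of_three h02 (Ne.symm one_ne_zero') (Ne.symm one_ne_two')
        (by simp [Hset]) (by simp [Hset]) (by simp) (by simp [Hset])
  · have hne : Hset m ≠ {some j} := by
      intro h
      have : none ∈ ({some j} : Finset (Option (Fin (m+3)))) := h ▸ (by simp [Hset])
      simp at this
    refine ⟨notGlobal_of_none_not_mem (by simp), Hset m, hH, hne, ?_,
      notGlobal_of_none_not_mem (by simp), notGlobal_Hset, ?_⟩
    · simp only [Finset.disjoint_left, mem_singleton]
      rintro x hx
      subst hx
      simp only [Hset, mem_insert, mem_singleton, Option.some.injEq]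
      push_neg
      exact ⟨Option.some_ne_none _, hj0, hj2⟩
    · exact global_of_three h02 (Ne.symm hj0) (Ne.symm hj2)
        (by simp [Hset]) (by simp [Hset]) (by simp) (by simp [Hset])

lemma upper (π : Finpartition (univ : Finset (Option (Fin (m+3)))))
    (hπ : IsGCPartition (wheelGraph (m+3)) π) : π.parts.card ≤ m + 2 := by
  by_contra hk
  push_neg at hk
  have hk : m + 3 ≤ π.parts.card := hk
  set H := π.part none with hHdef
  have hHmem : H ∈ π.parts := π.part_mem.mpr (mem_univ _)
  have hnoneH : none ∈ H := π.mem_part (mem_univ _)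
  have hglobH : ∀ A ∈ π.parts, A ≠ H → IsGlobalDomSet (wheelGraph (m+3)) (A ∪ H) := by
    intro A hA hAne
    obtain ⟨-, B, hB, hBA, hdisj, hnA, hnB, hglob⟩ := hπ A hA
    have hnoneB : none ∈ B := by
      rcases mem_union.mp (glob_iff.mp hglob).1 with h | h
      · exact absurd (π.part_eq_of_mem hA h).symm hAne
      · exact h
    have hBH : B = H := (π.part_eq_of_mem hB hnoneB).symm
    rwa [hBH] at hglob
  have hsum : ∑ A ∈ π.parts, A.card = m + 4 := by
    rw [π.sum_card_parts, card_univ]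
    simp
  have hone : ∀ A ∈ π.parts, 1 ≤ A.card := fun A hA =>
    (π.nonempty_of_mem_parts hA).card_pos
  have hsumE : ∑ A ∈ π.parts.erase H, A.card = m + 4 - H.card := by
    have := Finset.sum_erase_add π.parts Finset.card hHmem
    omega
  have hcardE : (π.parts.erase H).card = π.parts.card - 1 := card_erase_of_mem hHmem
  have hEle : (π.parts.erase H).card ≤ ∑ A ∈ π.parts.erase H, A.card := by
    calc (π.parts.erase H).card = ∑ _A ∈ π.parts.erase H, 1 := by simp
    _ ≤ ∑ A ∈ π.parts.erase H, A.card :=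
        Finset.sum_le_sum fun A hA => hone A (mem_of_mem_erase hA)
  have hHcard2 : H.card ≤ 2 := by omega
  have hHcard1 : 1 ≤ H.card := hone H hHmem
  -- helper to finish given a part equal to a bad singleton
  interval_cases hc : H.card
  · -- H.card = 1 : H = {none}
    obtain ⟨x, hx⟩ := Finset.card_eq_one.mp hc
    have hxnone : x = none := by
      have := hnoneH
      rw [hx, mem_singleton] at this
      exact this.symm
    subst hxnone
    -- find a singleton part other than H
    have : ∃ A ∈ π.parts.erase H, A.card = 1 := by
      by_contra hno
      push_neg at hno
      have h2 : ∀ A ∈ π.parts.erase H, 2 ≤ A.card := by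
        intro A hA
        have := hone A (mem_of_mem_erase hA)
        have := hno A hA
        omega
      have : 2 * (π.parts.erase H).card ≤ ∑ A ∈ π.parts.erase H, A.card := by
        calc 2 * (π.parts.erase H).card = ∑ _A ∈ π.parts.erase H, 2 := by
              rw [Finset.sum_const, smul_eq_mul, mul_comm]
        _ ≤ _ := Finset.sum_le_sum h2
      omega
    obtain ⟨A, hAE, hA1⟩ := this
    obtain ⟨y, hy⟩ := Finset.card_eq_one.mp hA1
    have hAmem : A ∈ π.parts := mem_of_mem_erase hAE
    have hAne : A ≠ H := ne_of_mem_erase hAE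
    have hynone : y ≠ none := by
      rintro rfl
      exact hAne (π.part_eq_of_mem hAmem (by rw [hy]; simp)).symm
    obtain ⟨a, rfl⟩ := Option.ne_none_iff_exists'.mp hynone
    have := hglobH A hAmem hAne
    rw [hy, hx] at this
    refine notGlobal_sub a ?_ this
    intro z hz
    simp only [mem_union, mem_singleton] at hz
    simp only [mem_insert, mem_singleton]
    rcases hz with h | h
    · exact Or.inr (Or.inl h)
    · exact Or.inl h
  · -- H.card = 2 : H = {none, some b}
    obtain ⟨x, hx⟩ : ∃ x, H.erase none = {x} := Finset.card_eq_one.mp (by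
      rw [card_erase_of_mem hnoneH]; omega)
    have hxH : x ∈ H := mem_of_mem_erase (by rw [hx]; simp)
    have hxnone : x ≠ none := by
      have : x ∈ H.erase none := by rw [hx]; simp
      exact ne_of_mem_erase this
    obtain ⟨b, rfl⟩ := Option.ne_none_iff_exists'.mp hxnone
    have hHeq : H = {none, some b} := by
      rw [← Finset.insert_erase hnoneH, hx]
    -- all parts other than H are singletons
    have hallone : ∀ A ∈ π.parts.erase H, A.card = 1 := by
      intro A hA
      by_contra hA1
      have hA2 : 2 ≤ A.card := by
        have := hone A (mem_of_mem_erase hA)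
        omega
      have hsplit := Finset.sum_erase_add (π.parts.erase H) Finset.card hA
      have h1le : ((π.parts.erase H).erase A).card ≤
          ∑ C ∈ (π.parts.erase H).erase A, C.card := by
        calc ((π.parts.erase H).erase A).card = ∑ _C ∈ (π.parts.erase H).erase A, 1 := by simp
        _ ≤ _ := Finset.sum_le_sum fun C hC =>
            hone C (mem_of_mem_erase (mem_of_mem_erase hC))
      have hcardEA : ((π.parts.erase H).erase A).card = (π.parts.erase H).card - 1 :=
        card_erase_of_mem hA
      omega
    -- the part of some (b+2)
    have hb2H : some (b+2) ∉ H := by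
      rw [hHeq]
      simp only [mem_insert, mem_singleton, Option.some.injEq]
      push_neg
      refine ⟨Option.some_ne_none _, ?_⟩
      intro h
      have : (2 : Fin (m+3)) = 0 := by
        have := h
        calc (2 : Fin (m+3)) = b + 2 - b := (add_sub_cancel_left b 2).symm
        _ = b - b := by rw [this]
        _ = 0 := sub_self b
      exact two_ne_zero' this
    set P := π.part (some (b+2)) with hPdef
    have hPmem : P ∈ π.parts := π.part_mem.mpr (mem_univ _)
    have hPb2 : some (b+2) ∈ P := π.mem_part (mem_univ _)
    have hPne : P ≠ H := fun h => hb2H (h ▸ hPb2)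
    have hP1 : P.card = 1 := hallone P (Finset.mem_erase.mpr ⟨hPne, hPmem⟩)
    have hPeq : P = {some (b+2)} := by
      obtain ⟨y, hy⟩ := Finset.card_eq_one.mp hP1
      rw [hy] at hPb2 ⊢
      rw [mem_singleton] at hPb2
      rw [hPb2]
    have := hglobH P hPmem hPne
    rw [hPeq, hHeq] at this
    refine notGlobal_sub b ?_ this
    intro z hz
    simp only [mem_union, mem_insert, mem_singleton] at hz
    simp only [mem_insert, mem_singleton]
    rcases hz with h | h | h
    · exact Or.inr (Or.inr h)
    · exact Or.inl h
    · exact Or.inr (Or.inl h)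

end GCW

set_option maxHeartbeats 1000000 in
theorem gc_wheelGraph (n : ℕ) (hn : 3 ≤ n) :
    globalCoalitionNumber (wheelGraph n) = n - 1 := by
  obtain ⟨m, rfl⟩ : ∃ m, n = m + 3 := ⟨n - 3, by omega⟩
  have hmem : m + 2 ∈ {k | ∃ π : Finpartition (univ : Finset (Option (Fin (m+3)))),
      IsGCPartition (wheelGraph (m+3)) π ∧ π.parts.card = k} :=
    ⟨GCW.gpartition m, GCW.isGC_gpartition, GCW.card_gparts⟩
  have hub : ∀ k ∈ {k | ∃ π : Finpartition (univ : Finset (Option (Fin (m+3)))),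
      IsGCPartition (wheelGraph (m+3)) π ∧ π.parts.card = k}, k ≤ m + 2 := by
    rintro k ⟨π, hπ, rfl⟩
    exact GCW.upper π hπ
  have : globalCoalitionNumber (wheelGraph (m+3)) = m + 2 := by
    apply le_antisymm
    · exact csSup_le ⟨m + 2, hmem⟩ hub
    · exact le_csSup ⟨m + 2, hub⟩ hmem
  rw [this]
  omega
end

section
/- Let G be a finite simple graph of order n with minimum degree δ(G) and maximum degree Δ(G), and let π be a gc-partition of G. If A ∈ π, then the number of parts of π that form a global coalition with A is at most max{ Δ(G)+1, min{ n − |A|, n − δ(G) } }. -/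
open SimpleGraph Finset

variable {V : Type*} [Fintype V] [DecidableEq V]

/-! A set with a global-coalition partner is not a global dominating set, so it fails to
dominate some vertex `v` in `H = G` or `H = Gᶜ`. Every partner must then meet the closed
`H`-neighbourhood of `v`, and partners are disjoint parts, so there are at most `deg_H v + 1` of
them. For `H = G` this is at most `Δ + 1`. For `H = Gᶜ` it is `n - deg_G v`, and `A ⊆ N_G(v)`
forces `deg_G v ≥ |A|`, while `deg_G v ≥ δ` always. -/

theorem Finpartition.card_le_card_of_forall_inter_nonempty {α : Type*} [DecidableEq α]
    {s : Finset α} (P : Finpartition s) {Q : Finset (Finset α)} (hQ : Q ⊆ P.parts)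
    {W : Finset α} (hW : ∀ B ∈ Q, (B ∩ W).Nonempty) : #Q ≤ #W :=
  card_le_card_of_forall_subsingleton (fun B x => x ∈ B)
    (fun B hB => (hW B hB).imp fun _ hx => (mem_inter.1 hx).symm)
    fun _ _ _ ⟨hB, hxB⟩ _ ⟨hC, hxC⟩ => P.eq_of_mem_parts (hQ hB) (hQ hC) hxB hxC

theorem not_isDomSet_iff {α : Type*} {H : SimpleGraph α} {S : Finset α} :
    ¬ IsDomSet H S ↔ ∃ v ∉ S, ∀ u ∈ S, ¬ H.Adj u v := by
  simp only [IsDomSet, not_forall, not_or, not_exists, not_and]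

section

variable {α : Type*} [Fintype α]

theorem IsDomSet.inter_insert_neighborFinset_nonempty [DecidableEq α] {H : SimpleGraph α}
    [DecidableRel H.Adj] {A B : Finset α} (h : IsDomSet H (A ∪ B)) {v : α} (hvA : v ∉ A)
    (hA : ∀ u ∈ A, ¬ H.Adj u v) : (B ∩ insert v (H.neighborFinset v)).Nonempty := by
  rcases h v with hv | ⟨u, hu, huv⟩
  · exact ⟨v, mem_inter.2 ⟨(mem_union.1 hv).resolve_left hvA, mem_insert_self _ _⟩⟩
  · refine ⟨u, mem_inter.2 ⟨(mem_union.1 hu).resolve_left fun huA => hA u huA huv, ?_⟩⟩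
    exact mem_insert_of_mem ((H.mem_neighborFinset v u).2 huv.symm)

theorem card_le_degree_add_one_of_forall_isDomSet_union [DecidableEq α] (H : SimpleGraph α)
    [DecidableRel H.Adj]
    {s : Finset α} (P : Finpartition s) {Q : Finset (Finset α)} (hQ : Q ⊆ P.parts)
    {A : Finset α} (hdom : ∀ B ∈ Q, IsDomSet H (A ∪ B)) {v : α} (hvA : v ∉ A)
    (hA : ∀ u ∈ A, ¬ H.Adj u v) : #Q ≤ H.degree v + 1 :=
  calc #Q ≤ #(insert v (H.neighborFinset v)) :=
        P.card_le_card_of_forall_inter_nonempty hQ fun B hB =>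
          (hdom B hB).inter_insert_neighborFinset_nonempty hvA hA
    _ ≤ H.degree v + 1 := by
        rw [← card_neighborFinset_eq_degree]
        exact card_insert_le _ _

theorem card_le_degree_of_not_compl_adj {G : SimpleGraph α} [DecidableRel G.Adj]
    {A : Finset α} {v : α} (hvA : v ∉ A) (hA : ∀ u ∈ A, ¬ Gᶜ.Adj u v) :
    #A ≤ G.degree v := by
  rw [← card_neighborFinset_eq_degree]
  refine card_le_card fun u hu => (G.mem_neighborFinset v u).2 ?_
  have hne : u ≠ v := fun h => hvA (h ▸ hu)
  simpa [compl_adj, hne, G.adj_comm] using hA u hu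

theorem SimpleGraph.degree_compl_add_one [DecidableEq α] (G : SimpleGraph α) [DecidableRel G.Adj]
    (v : α) : Gᶜ.degree v + 1 = Fintype.card α - G.degree v := by
  have := G.degree_lt_card_verts v
  rw [degree_compl]
  omega

end

theorem gc_partner_bound_general (G : SimpleGraph V) [DecidableRel G.Adj]
    (π : Finpartition (Finset.univ : Finset V))
    (A : Finset V) :
    {B | B ∈ π.parts ∧ IsGlobalCoalition G A B}.ncard ≤
      max (G.maxDegree + 1)
        (min (Fintype.card V - A.card) (Fintype.card V - G.minDegree)) := by
  classical
  rw [← coe_filter, Set.ncard_coe_finset]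
  set Q := {B ∈ π.parts | IsGlobalCoalition G A B}
  have hQ : Q ⊆ π.parts := filter_subset _ _
  have hcoal : ∀ B ∈ Q, IsGlobalCoalition G A B := fun B hB => (mem_filter.1 hB).2
  have hdom : ∀ B ∈ Q, IsGlobalDomSet G (A ∪ B) := fun B hB => (hcoal B hB).2.2.2
  obtain hQe | ⟨B, hB⟩ := Q.eq_empty_or_nonempty
  · simp [hQe]
  rcases not_and_or.1 (hcoal B hB).2.1 with hG | hGc
  · obtain ⟨v, hvA, hA⟩ := not_isDomSet_iff.1 hG
    calc #Q ≤ G.degree v + 1 :=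
          card_le_degree_add_one_of_forall_isDomSet_union G π hQ (fun B hB => (hdom B hB).1)
            hvA hA
      _ ≤ G.maxDegree + 1 := Nat.add_le_add_right (G.degree_le_maxDegree v) 1
      _ ≤ _ := le_max_left _ _
  · obtain ⟨v, hvA, hA⟩ := not_isDomSet_iff.1 hGc
    calc #Q ≤ Gᶜ.degree v + 1 :=
          card_le_degree_add_one_of_forall_isDomSet_union Gᶜ π hQ (fun B hB => (hdom B hB).2)
            hvA hA
      _ = Fintype.card V - G.degree v := G.degree_compl_add_one v
      _ ≤ min (Fintype.card V - #A) (Fintype.card V - G.minDegree) :=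
          le_min (Nat.sub_le_sub_left (card_le_degree_of_not_compl_adj hvA hA) _)
            (Nat.sub_le_sub_left (G.minDegree_le_degree v) _)
      _ ≤ _ := le_max_right _ _

theorem gc_partner_bound (G : SimpleGraph V) [DecidableRel G.Adj]
    (π : Finpartition (Finset.univ : Finset V)) (hπ : IsGCPartition G π)
    (A : Finset V) (hA : A ∈ π.parts) :
    {B | B ∈ π.parts ∧ IsGlobalCoalition G A B}.ncard ≤
      max (G.maxDegree + 1)
        (min (Fintype.card V - A.card) (Fintype.card V - G.minDegree)) :=
  gc_partner_bound_general G π A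
end

section
/- For any finite simple graph G with at least two vertices, GC(G) ≥ 2·d_g(G), where d_g(G) is the global domatic number of G. -/
open SimpleGraph Finset

variable {V : Type*} [Fintype V] [DecidableEq V]

/-- `π` is a global domatic partition of `G`: every part is a global dominating set. -/
def IsGlobalDomaticPartition (G : SimpleGraph V)
    (π : Finpartition (Finset.univ : Finset V)) : Prop :=
  ∀ A ∈ π.parts, IsGlobalDomSet G A

/-- The global domatic number `d_g(G)`. -/
noncomputable def globalDomaticNumber (G : SimpleGraph V) : ℕ :=
  sSup {n | ∃ π : Finpartition (Finset.univ : Finset V),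
    IsGlobalDomaticPartition G π ∧ π.parts.card = n}

/- ### Auxiliary lemmas -/

lemma gd_mono {G : SimpleGraph V} {A B : Finset V} (h : A ⊆ B)
    (hA : IsGlobalDomSet G A) : IsGlobalDomSet G B := by
  obtain ⟨h1, h2⟩ := hA
  constructor
  · intro v
    rcases h1 v with hv | ⟨u, hu, hadj⟩
    · exact Or.inl (h hv)
    · exact Or.inr ⟨u, h hu, hadj⟩
  · intro v
    rcases h2 v with hv | ⟨u, hu, hadj⟩
    · exact Or.inl (h hv)
    · exact Or.inr ⟨u, h hu, hadj⟩

lemma not_gd_empty {G : SimpleGraph V} (hV : Nonempty V) :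
    ¬ IsGlobalDomSet G (∅ : Finset V) := by
  rintro ⟨h1, -⟩
  obtain ⟨v⟩ := hV
  rcases h1 v with hv | ⟨u, hu, -⟩
  · exact absurd hv (Finset.notMem_empty v)
  · exact absurd hu (Finset.notMem_empty u)

lemma not_gd_singleton {G : SimpleGraph V} (hn : 1 < Fintype.card V) (u : V) :
    ¬ IsGlobalDomSet G ({u} : Finset V) := by
  obtain ⟨v, hvu⟩ := Fintype.exists_ne_of_one_lt_card hn u
  rintro ⟨h1, h2⟩
  by_cases hadj : G.Adj u v
  · rcases h2 v with hv | ⟨w, hw, hadj'⟩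
    · exact hvu (Finset.mem_singleton.1 hv)
    · rw [Finset.mem_singleton] at hw
      subst hw
      rw [SimpleGraph.compl_adj] at hadj'
      exact hadj'.2 hadj
  · rcases h1 v with hv | ⟨w, hw, hadj'⟩
    · exact hvu (Finset.mem_singleton.1 hv)
    · rw [Finset.mem_singleton] at hw
      subst hw
      exact hadj hadj'

lemma two_le_card_of_gd {G : SimpleGraph V} (hn : 1 < Fintype.card V)
    {S : Finset V} (hS : IsGlobalDomSet G S) : 2 ≤ S.card := by
  have hV : Nonempty V := Fintype.card_pos_iff.mp (by omega)
  by_contra h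
  push_neg at h
  interval_cases hc : S.card
  · rw [Finset.card_eq_zero] at hc
    subst hc
    exact not_gd_empty hV hS
  · rw [Finset.card_eq_one] at hc
    obtain ⟨u, rfl⟩ := hc
    exact not_gd_singleton hn u hS

lemma exists_minimal_gds (G : SimpleGraph V) {S : Finset V} (hS : IsGlobalDomSet G S) :
    ∃ D ⊆ S, IsGlobalDomSet G D ∧ ∀ v ∈ D, ¬ IsGlobalDomSet G (D.erase v) := by
  classical
  set T : Finset (Finset V) := S.powerset.filter (fun D => IsGlobalDomSet G D) with hT
  have hTne : T.Nonempty := ⟨S, by simp [hT, hS]⟩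
  obtain ⟨D, hD, hmin⟩ := T.exists_minimal hTne
  rw [hT, Finset.mem_filter, Finset.mem_powerset] at hD
  refine ⟨D, hD.1, hD.2, fun v hv hgd => ?_⟩
  have hmem : D.erase v ∈ T := by
    rw [hT, Finset.mem_filter, Finset.mem_powerset]
    exact ⟨(Finset.erase_subset _ _).trans hD.1, hgd⟩
  exact Finset.notMem_erase v D (hmin hmem (Finset.erase_subset _ _) hv)

/-- Every global dominating set admits an "internal gc-partition": a partition into at
least two parts, each failing to be a global dominating set, and each forming a global
coalition with another part. -/
lemma exists_internal (G : SimpleGraph V) (hn : 1 < Fintype.card V) :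
    ∀ n (S : Finset V), S.card ≤ n → IsGlobalDomSet G S →
    ∃ P : Finpartition S, 2 ≤ P.parts.card ∧
      ∀ A ∈ P.parts, ¬ IsGlobalDomSet G A ∧
        ∃ B ∈ P.parts, B ≠ A ∧ IsGlobalCoalition G A B := by
  intro n
  induction n with
  | zero =>
    intro S hcard hS
    have h2 := two_le_card_of_gd hn hS
    omega
  | succ n ih =>
    intro S hcard hS
    obtain ⟨D, hDS, hDgd, hDmin⟩ := exists_minimal_gds G hS
    have hD2 : 2 ≤ D.card := two_le_card_of_gd hn hDgd
    obtain ⟨v, hv⟩ : D.Nonempty := Finset.card_pos.mp (by omega)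
    have hAne : (D.erase v).Nonempty := by
      rw [← Finset.card_pos, Finset.card_erase_of_mem hv]
      omega
    set A : Finset V := D.erase v with hAdef
    have hAnotgd : ¬ IsGlobalDomSet G A := hDmin v hv
    have hAS : A ⊆ S := (Finset.erase_subset _ _).trans hDS
    set B : Finset V := S \ A with hBdef
    have hABS : A ∪ B = S := Finset.union_sdiff_of_subset hAS
    have hAB : Disjoint A B := Finset.disjoint_sdiff
    have hvB : v ∈ B := by
      rw [hBdef, Finset.mem_sdiff]
      exact ⟨hDS hv, Finset.notMem_erase v D⟩
    have hBne : B.Nonempty := ⟨v, hvB⟩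
    by_cases hBgd : IsGlobalDomSet G B
    · -- recurse on B
      have hBcard : B.card ≤ n := by
        have h1 : B.card = S.card - A.card := Finset.card_sdiff_of_subset hAS
        have h2 : 1 ≤ A.card := Finset.card_pos.mpr hAne
        omega
      obtain ⟨P, hP2, hPprop⟩ := ih B hBcard hBgd
      by_cases hmerge : ∃ Q ∈ P.parts, ¬ IsGlobalDomSet G (A ∪ Q)
      · -- merge A into the part Q
        obtain ⟨Q, hQmem, hQA⟩ := hmerge
        obtain ⟨-, Q', hQ'mem, hQ'ne, hco⟩ := hPprop Q hQmem
        have hQ'erase : Q' ∈ P.parts.erase Q := Finset.mem_erase.mpr ⟨hQ'ne, hQ'mem⟩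
        have hQne : Q.Nonempty := Finset.nonempty_iff_ne_empty.mpr (P.ne_bot hQmem)
        have hAQQ' : A ∪ Q ≠ Q' := by
          intro h
          obtain ⟨x, hx⟩ := hQne
          exact Finset.disjoint_left.mp hco.1 hx (h ▸ Finset.mem_union_right A hx)
        have hdisjAQ : ∀ d ∈ P.parts, d ≠ Q → Disjoint (A ∪ Q) d := by
          intro d hd hdQ
          refine Finset.disjoint_union_left.mpr ⟨hAB.mono_right (P.le hd), ?_⟩
          exact P.disjoint hQmem hd (Ne.symm hdQ)
        refine ⟨⟨insert (A ∪ Q) (P.parts.erase Q), ?_, ?_, ?_⟩, ?_, ?_⟩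
        · -- supIndep
          rw [Finset.supIndep_iff_pairwiseDisjoint, Finset.coe_insert]
          refine Set.PairwiseDisjoint.insert
            (P.disjoint.subset (Finset.coe_subset.mpr (Finset.erase_subset _ _))) ?_
          intro d hd _
          simp only [Finset.mem_coe] at hd
          exact hdisjAQ d (Finset.mem_of_mem_erase hd) (Finset.ne_of_mem_erase hd)
        · -- sup_parts
          have hQE : Q ∪ (P.parts.erase Q).sup id = B := by
            have := P.sup_parts
            rw [← Finset.insert_erase hQmem, Finset.sup_insert] at this
            simpa using this
          rw [Finset.sup_insert]
          simp only [id_eq, sup_eq_union]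
          rw [Finset.union_assoc, hQE, hABS]
        · -- not_bot_mem
          intro h
          rcases Finset.mem_insert.1 h with h | h
          · have : (A ∪ Q).Nonempty := hAne.mono Finset.subset_union_left
            exact this.ne_empty h.symm
          · exact P.bot_notMem (Finset.mem_of_mem_erase h)
        · -- card ≥ 2
          rw [show (2 : ℕ) = 1 + 1 by rfl]
          refine Finset.one_lt_card.mpr ⟨A ∪ Q, Finset.mem_insert_self _ _,
            Q', Finset.mem_insert_of_mem hQ'erase, hAQQ'⟩
        · -- properties
          intro X hX
          rcases Finset.mem_insert.1 hX with rfl | hX'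
          · have hsub : Q ∪ Q' ⊆ (A ∪ Q) ∪ Q' :=
              Finset.union_subset_union Finset.subset_union_right (Finset.Subset.refl _)
            exact ⟨hQA, Q', Finset.mem_insert_of_mem hQ'erase, Ne.symm hAQQ',
              hdisjAQ Q' hQ'mem hQ'ne, hQA, hco.2.2.1, gd_mono hsub hco.2.2.2⟩
          · have hXP : X ∈ P.parts := Finset.mem_of_mem_erase hX'
            have hXQ : X ≠ Q := Finset.ne_of_mem_erase hX'
            have hXne : X.Nonempty := Finset.nonempty_iff_ne_empty.mpr (P.ne_bot hXP)
            obtain ⟨hXngd, X', hX'mem, hX'ne, hcoX⟩ := hPprop X hXP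
            by_cases hX'Q : X' = Q
            · subst hX'Q
              have hne : A ∪ X' ≠ X := by
                intro h
                have hd := hdisjAQ X hXP hXQ
                rw [h] at hd
                exact hXne.ne_empty (Finset.bot_eq_empty ▸ disjoint_self.mp hd)
              have hsub : X ∪ X' ⊆ X ∪ (A ∪ X') :=
                Finset.union_subset_union (Finset.Subset.refl _) Finset.subset_union_right
              exact ⟨hXngd, A ∪ X', Finset.mem_insert_self _ _, hne,
                (hdisjAQ X hXP hXQ).symm, hXngd, hQA, gd_mono hsub hcoX.2.2.2⟩
            · have hX'erase : X' ∈ P.parts.erase Q := Finset.mem_erase.mpr ⟨hX'Q, hX'mem⟩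
              exact ⟨hXngd, X', Finset.mem_insert_of_mem hX'erase, hX'ne, hcoX⟩
      · -- no merge possible: every A ∪ Q is a GDS, add A as its own part
        push_neg at hmerge
        have hAbot : A ≠ ⊥ := by
          rw [Finset.bot_eq_empty]
          exact hAne.ne_empty
        have hBA : Disjoint B A := hAB.symm
        have hc : B ⊔ A = S := by
          rw [sup_eq_union, Finset.union_comm]
          exact hABS
        refine ⟨P.extend hAbot hBA hc, ?_, ?_⟩
        · rw [Finpartition.card_extend]
          omega
        · have hpe : (P.extend hAbot hBA hc).parts = insert A P.parts := by
            simp [Finpartition.extend]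
          intro X hX
          rw [hpe] at hX
          rw [hpe]
          obtain ⟨Q0, hQ0⟩ : P.parts.Nonempty := Finset.card_pos.mp (by omega)
          have hQ0ne : Q0.Nonempty := Finset.nonempty_iff_ne_empty.mpr (P.ne_bot hQ0)
          have hAQ0 : Disjoint A Q0 := hAB.mono_right (P.le hQ0)
          have hAQ0ne : A ≠ Q0 := by
            intro h
            rw [h] at hAQ0
            exact hQ0ne.ne_empty (Finset.bot_eq_empty ▸ disjoint_self.mp hAQ0)
          rcases Finset.mem_insert.1 hX with rfl | hXP
          · exact ⟨hAnotgd, Q0, Finset.mem_insert_of_mem hQ0, Ne.symm hAQ0ne,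
              hAQ0, hAnotgd, (hPprop Q0 hQ0).1, hmerge Q0 hQ0⟩
          · obtain ⟨hXngd, X', hX'mem, hX'ne, hcoX⟩ := hPprop X hXP
            exact ⟨hXngd, X', Finset.mem_insert_of_mem hX'mem, hX'ne, hcoX⟩
    · -- B is not a GDS: the pair {A, B} works
      have hAbot : A ≠ ⊥ := by
        rw [Finset.bot_eq_empty]
        exact hAne.ne_empty
      have hBbot : B ≠ ⊥ := by
        rw [Finset.bot_eq_empty]
        exact hBne.ne_empty
      have hc : A ⊔ B = S := by
        rw [sup_eq_union]
        exact hABS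
      have hABne : A ≠ B := by
        intro h
        obtain ⟨x, hx⟩ := hAne
        exact Finset.disjoint_left.mp hAB hx (h ▸ hx)
      refine ⟨(Finpartition.indiscrete hAbot).extend hBbot hAB hc, ?_, ?_⟩
      · rw [Finpartition.card_extend]
        simp [Finpartition.indiscrete]
      · have hpe : ((Finpartition.indiscrete hAbot).extend hBbot hAB hc).parts
            = insert B {A} := by
          simp [Finpartition.extend, Finpartition.indiscrete]
        intro X hX
        rw [hpe] at hX
        rw [hpe]
        have hSgd : IsGlobalDomSet G (A ∪ B) := by
          rw [hABS]
          exact hS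
        rcases Finset.mem_insert.1 hX with rfl | hX2
        · refine ⟨hBgd, A, Finset.mem_insert_of_mem (Finset.mem_singleton_self A),
            hABne, hAB.symm, hBgd, hAnotgd, ?_⟩
          rw [Finset.union_comm]
          exact hSgd
        · rw [Finset.mem_singleton] at hX2
          subst hX2
          exact ⟨hAnotgd, B, Finset.mem_insert_self _ _, Ne.symm hABne,
            hAB, hAnotgd, hBgd, hSgd⟩

theorem gc_ge_two_mul_globalDomatic (G : SimpleGraph V) (hn : 1 < Fintype.card V) :
    2 * globalDomaticNumber G ≤ globalCoalitionNumber G := by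
  classical
  have hV : Nonempty V := Fintype.card_pos_iff.mp (by omega)
  set setD := {n | ∃ π : Finpartition (Finset.univ : Finset V),
    IsGlobalDomaticPartition G π ∧ π.parts.card = n} with hsetD
  set setC := {n | ∃ π : Finpartition (Finset.univ : Finset V),
    IsGCPartition G π ∧ π.parts.card = n} with hsetC
  have huniv_ne : (Finset.univ : Finset V) ≠ ⊥ := by
    rw [Finset.bot_eq_empty]
    exact (Finset.univ_nonempty).ne_empty
  have hD_ne : setD.Nonempty := by
    refine ⟨1, Finpartition.indiscrete huniv_ne, ?_, by simp [Finpartition.indiscrete]⟩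
    intro A hA
    simp only [Finpartition.indiscrete_parts, Finset.mem_singleton] at hA
    subst hA
    exact ⟨fun v => Or.inl (Finset.mem_univ v), fun v => Or.inl (Finset.mem_univ v)⟩
  have hD_bdd : BddAbove setD := by
    refine ⟨Fintype.card (Finset V), ?_⟩
    rintro n ⟨π, -, rfl⟩
    exact Finset.card_le_univ _
  have hC_bdd : BddAbove setC := by
    refine ⟨Fintype.card (Finset V), ?_⟩
    rintro n ⟨π, -, rfl⟩
    exact Finset.card_le_univ _
  have hmem : sSup setD ∈ setD := Nat.sSup_mem hD_ne hD_bdd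
  obtain ⟨π, hπdom, hπcard⟩ := hmem
  have hQ : ∀ i ∈ π.parts, ∃ P : Finpartition i, 2 ≤ P.parts.card ∧
      ∀ A ∈ P.parts, ¬ IsGlobalDomSet G A ∧
        ∃ B ∈ P.parts, B ≠ A ∧ IsGlobalCoalition G A B := by
    intro i hi
    exact exists_internal G hn i.card i le_rfl (hπdom i hi)
  choose Q hQ2 hQprop using hQ
  set π' : Finpartition (Finset.univ : Finset V) := π.bind Q with hπ'
  have hGC : IsGCPartition G π' := by
    intro A hA
    rw [hπ', Finpartition.mem_bind] at hA
    obtain ⟨i, hi, hAi⟩ := hA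
    obtain ⟨hAngd, B, hB, hBne, hcoAB⟩ := hQprop i hi A hAi
    refine ⟨hAngd, B, ?_, hBne, hcoAB⟩
    rw [hπ', Finpartition.mem_bind]
    exact ⟨i, hi, hB⟩
  have hcard : 2 * sSup setD ≤ π'.parts.card := by
    rw [hπ', Finpartition.card_bind]
    calc 2 * sSup setD = π.parts.attach.card * 2 := by
          rw [Finset.card_attach, hπcard, Nat.mul_comm]
      _ ≤ ∑ A ∈ π.parts.attach, (Q A.1 A.2).parts.card := by
          rw [← smul_eq_mul]
          exact Finset.card_nsmul_le_sum _ _ _ (fun x _ => hQ2 x.1 x.2)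
  have hmemC : π'.parts.card ∈ setC := ⟨π', hGC, rfl⟩
  calc 2 * globalDomaticNumber G = 2 * sSup setD := rfl
    _ ≤ π'.parts.card := hcard
    _ ≤ sSup setC := le_csSup hC_bdd hmemC
    _ = globalCoalitionNumber G := rfl
end

section
/- If G is a finite connected simple graph with radius at least 3, then GC(G) = C(G), where C(G) is the coalition number of G. -/
/-!
If `rad G ≥ 3`, no dominating set of `G` lies in the closed neighbourhood of a vertex `v`, since
otherwise every vertex would be within distance `2` of `v`. Hence no singleton dominates `G`, and
a dominating set `S` also dominates `Ḡ`: a vertex `v ∉ S` with no `Ḡ`-neighbour in `S` would be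
adjacent in `G` to all of `S`. So global domination is domination, global coalitions are
coalitions, and gc-partitions are exactly the coalition partitions.
-/

open SimpleGraph Finset

variable {V : Type*} [Fintype V] [DecidableEq V]

/-- Disjoint sets `A` and `B` form a coalition in `G`. -/
def IsCoalition (G : SimpleGraph V) (A B : Finset V) : Prop :=
  Disjoint A B ∧ ¬ IsDomSet G A ∧ ¬ IsDomSet G B ∧ IsDomSet G (A ∪ B)

/-- `π` is a coalition partition of `G`. -/
def IsCoalitionPartition (G : SimpleGraph V) (π : Finpartition (Finset.univ : Finset V)) : Prop :=
  ∀ A ∈ π.parts, (∃ v : V, A = {v} ∧ IsDomSet G A) ∨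
    (¬ IsDomSet G A ∧ ∃ B ∈ π.parts, B ≠ A ∧ IsCoalition G A B)

/-- The coalition number `C(G)`: the maximum number of parts in a coalition partition of `G`. -/
noncomputable def coalitionNumber (G : SimpleGraph V) : ℕ :=
  sSup {n | ∃ π : Finpartition (Finset.univ : Finset V), IsCoalitionPartition G π ∧ π.parts.card = n}

/-- The eccentricity of a vertex: the maximum distance from `v` to any vertex. -/
noncomputable def eccentricity (G : SimpleGraph V) (v : V) : ℕ :=
  Finset.univ.sup fun u => G.dist v u

/-- The radius of a graph: the minimum eccentricity over all vertices. -/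
noncomputable def graphRadius (G : SimpleGraph V) : ℕ :=
  sInf (Set.range (eccentricity G))

section Domination

omit [DecidableEq V]

variable {G : SimpleGraph V}

lemma eccentricity_le_two_of_isDomSet (hc : G.Connected) {S : Finset V} {v : V}
    (hS : IsDomSet G S) (hSv : ∀ u ∈ S, G.dist v u ≤ 1) : eccentricity G v ≤ 2 := by
  refine Finset.sup_le fun w _ => ?_
  rcases hS w with hw | ⟨u, hu, huw⟩
  · exact (hSv w hw).trans one_le_two
  · calc G.dist v w ≤ G.dist v u + G.dist u w := hc.dist_triangle
      _ ≤ 1 + 1 := by rw [dist_eq_one_iff_adj.2 huw]; exact Nat.add_le_add_right (hSv u hu) 1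

lemma IsDomSet.not_forall_dist_le_one (hc : G.Connected) (hr : 3 ≤ graphRadius G)
    {S : Finset V} (hS : IsDomSet G S) (v : V) : ¬ ∀ u ∈ S, G.dist v u ≤ 1 := fun hSv => by
  have h2 := eccentricity_le_two_of_isDomSet hc hS hSv
  have h3 : graphRadius G ≤ eccentricity G v := Nat.sInf_le ⟨v, rfl⟩
  omega

lemma not_isDomSet_singleton (hc : G.Connected) (hr : 3 ≤ graphRadius G) (v : V) :
    ¬ IsDomSet G {v} :=
  fun hv => hv.not_forall_dist_le_one hc hr v (by simp)

lemma IsDomSet.compl (hc : G.Connected) (hr : 3 ≤ graphRadius G) {S : Finset V}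
    (hS : IsDomSet G S) : IsDomSet Gᶜ S := by
  intro v
  by_contra! hv
  refine hS.not_forall_dist_le_one hc hr v fun u hu => ?_
  have huv : u ≠ v := fun h => hv.1 (h ▸ hu)
  have hadj : G.Adj u v := by simpa [compl_adj, huv] using hv.2 u hu
  exact (dist_eq_one_iff_adj.2 hadj.symm).le

lemma isGlobalDomSet_iff_isDomSet (hc : G.Connected) (hr : 3 ≤ graphRadius G) (S : Finset V) :
    IsGlobalDomSet G S ↔ IsDomSet G S :=
  ⟨And.left, fun hS => ⟨hS, hS.compl hc hr⟩⟩

end Domination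

section Coalition

variable {G : SimpleGraph V}

lemma isGlobalCoalition_iff_isCoalition (hc : G.Connected) (hr : 3 ≤ graphRadius G)
    (A B : Finset V) : IsGlobalCoalition G A B ↔ IsCoalition G A B := by
  simp only [IsGlobalCoalition, IsCoalition, isGlobalDomSet_iff_isDomSet hc hr]

lemma isGCPartition_iff_isCoalitionPartition (hc : G.Connected) (hr : 3 ≤ graphRadius G)
    (π : Finpartition (Finset.univ : Finset V)) :
    IsGCPartition G π ↔ IsCoalitionPartition G π := by
  have hsingle : ∀ A : Finset V, ¬ ∃ v, A = {v} ∧ IsDomSet G A := by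
    rintro A ⟨v, rfl, hv⟩
    exact not_isDomSet_singleton hc hr v hv
  simp only [IsGCPartition, IsCoalitionPartition, isGlobalDomSet_iff_isDomSet hc hr,
    isGlobalCoalition_iff_isCoalition hc hr, hsingle, false_or]

end Coalition

theorem gc_eq_c_of_radius_ge_three (G : SimpleGraph V) (hc : G.Connected)
    (hr : 3 ≤ graphRadius G) :
    globalCoalitionNumber G = coalitionNumber G := by
  simp only [globalCoalitionNumber, coalitionNumber, isGCPartition_iff_isCoalitionPartition hc hr]
end

section
/- Let T be a finite tree with radius 2 and diameter 4, and let v be the unique vertex of T with eccentricity 2. If ℓ denotes the number of vertices of T at distance exactly 2 from v, then GC(T) = ℓ + 2. -/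
open SimpleGraph Finset

variable {V : Type*} [Fintype V] [DecidableEq V]

/-- The diameter of a graph: the maximum eccentricity over all vertices. -/
noncomputable def graphDiam (G : SimpleGraph V) : ℕ :=
  Finset.univ.sup (eccentricity G)


/-!
Write `N` for the neighbours of the centre `v` and `L` for the vertices at distance two. Every
`l ∈ L` is a leaf with a unique neighbour `p l ∈ N`, and since the diameter is four the leaves do not
all share their parent. Then `S` is globally dominating iff it contains every leaf or its parent,
dominates each vertex of `N` by itself, by `v` or by a child, and contains `v` or else both a vertex
of `N` and a leaf: two leaves with different parents give every vertex other than `v` a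
non-neighbour in `S`, so domination in the complement is automatic away from `v`.

The parts `{v}`, `N` and `{l}` for `l ∈ L` form a gc-partition, with `N` as everybody's partner.
Conversely, in a gc-partition at most one of the parts contained in `N` has the part of `v` as
partner, as that part would otherwise be globally dominating. So if two parts lie in `N`, one of
them, `A`, has a partner `B` avoiding `v`, and then `B` contains a child of every vertex of `N`
outside `A ∪ B`. Let the part containing `l`, or containing `p l` when `l ∈ B`, own the leaf `l`.
Every part other than `A`, `B` and `{v}` owns a leaf, and a look at the partner of `{v}`, which
covers the leaves, shows that either `A` owns a leaf too or a single part owns all of them.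
-/

/-- `v` is the root, `N` its children, `L` its grandchildren and `p` the parent map on `L`. -/
structure DepthTwoLayers (v : V) (N L : Finset V) (p : V → V) : Prop where
  eq_or_mem : ∀ u, u = v ∨ u ∈ N ∨ u ∈ L
  root_notMem_children : v ∉ N
  root_notMem_leaves : v ∉ L
  disjoint_children_leaves : Disjoint N L
  parent_mem : ∀ l ∈ L, p l ∈ N
  exists_parent_ne : ∀ w, ∃ l ∈ L, p l ≠ w

structure IsDepthTwoTree (G : SimpleGraph V) (v : V) (N L : Finset V) (p : V → V) : Prop
    extends DepthTwoLayers v N L p where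
  adj_root_iff : ∀ u, G.Adj v u ↔ u ∈ N
  not_adj_children : ∀ n ∈ N, ∀ n' ∈ N, ¬ G.Adj n n'
  adj_leaf_iff : ∀ l ∈ L, ∀ x, G.Adj x l ↔ x = p l

def CoversLeaves (L : Finset V) (p : V → V) (S : Finset V) : Prop :=
  ∀ l ∈ L, l ∈ S ∨ p l ∈ S

/-- `codominates_root` is the domination of `v` in the complement graph. -/
structure DepthTwoGlobalDom (v : V) (N L : Finset V) (p : V → V) (S : Finset V) : Prop where
  covers : CoversLeaves L p S
  dominates_children : ∀ n ∈ N, n ∈ S ∨ v ∈ S ∨ ∃ c ∈ L, p c = n ∧ c ∈ S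
  dominates_root : v ∈ S ∨ ∃ n ∈ N, n ∈ S
  codominates_root : v ∈ S ∨ ∃ l ∈ L, l ∈ S

section Layers

omit [Fintype V] [DecidableEq V]

variable {v : V} {N L : Finset V} {p : V → V}

lemma DepthTwoGlobalDom.of_root_mem {S : Finset V} (hvS : v ∈ S) (hS : CoversLeaves L p S) :
    DepthTwoGlobalDom v N L p S :=
  ⟨hS, fun _ _ => Or.inr (Or.inl hvS), Or.inl hvS, Or.inl hvS⟩

namespace DepthTwoLayers

variable (h : DepthTwoLayers v N L p)
include h

lemma ne_root_of_mem_leaves {l : V} (hl : l ∈ L) : l ≠ v := by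
  rintro rfl; exact h.root_notMem_leaves hl

lemma ne_root_of_mem_children {n : V} (hn : n ∈ N) : n ≠ v := by
  rintro rfl; exact h.root_notMem_children hn

lemma notMem_leaves_of_mem_children {n : V} (hn : n ∈ N) : n ∉ L :=
  disjoint_left.1 h.disjoint_children_leaves hn

lemma mem_children {x : V} (hxv : x ≠ v) (hxL : x ∉ L) : x ∈ N :=
  ((h.eq_or_mem x).resolve_left hxv).resolve_right hxL

lemma two_le_card_leaves : 2 ≤ #L := by
  obtain ⟨l, hl, -⟩ := h.exists_parent_ne v
  obtain ⟨l', hl', hne⟩ := h.exists_parent_ne (p l)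
  exact one_lt_card.2 ⟨l', hl', l, hl, fun e => hne (e ▸ rfl)⟩

lemma not_coversLeaves_singleton {u : V} (hu : u ∉ N) : ¬ CoversLeaves L p {u} := by
  intro hcov
  obtain ⟨l', hl', hpl'⟩ := h.exists_parent_ne (p u)
  rcases hcov l' hl' with hl'u | hpl'u
  · exact hpl' (by rw [mem_singleton.1 hl'u])
  · exact hu (mem_singleton.1 hpl'u ▸ h.parent_mem l' hl')

end DepthTwoLayers

namespace IsDepthTwoTree

variable {G : SimpleGraph V} (h : IsDepthTwoTree G v N L p)
include h

lemma not_adj_leaves {l l' : V} (hl : l ∈ L) (hl' : l' ∈ L) : ¬ G.Adj l l' := by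
  rw [h.adj_leaf_iff l' hl']
  rintro rfl
  exact h.notMem_leaves_of_mem_children (h.parent_mem l' hl') hl

lemma exists_compl_adj_of_covers {S : Finset V} (hS : CoversLeaves L p S) {u : V} (hu : u ≠ v) :
    ∃ x ∈ S, Gᶜ.Adj x u := by
  have of_leaf : ∀ l ∈ L, l ≠ u ∧ ¬ G.Adj l u → p l ≠ u ∧ ¬ G.Adj (p l) u →
      ∃ x ∈ S, Gᶜ.Adj x u := fun l hl hl' hpl' =>
    (hS l hl).elim (fun hlS => ⟨l, hlS, (G.compl_adj _ _).2 hl'⟩)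
      (fun hpS => ⟨p l, hpS, (G.compl_adj _ _).2 hpl'⟩)
  rcases h.eq_or_mem u with rfl | hu | hu
  · exact absurd rfl hu
  · obtain ⟨l, hl, hpl⟩ := h.exists_parent_ne u
    refine of_leaf l hl ⟨?_, ?_⟩ ⟨hpl, h.not_adj_children _ (h.parent_mem l hl) u hu⟩
    · rintro rfl; exact h.notMem_leaves_of_mem_children hu hl
    · rw [adj_comm, h.adj_leaf_iff l hl]; exact hpl.symm
  · obtain ⟨l, hl, hpl⟩ := h.exists_parent_ne (p u)
    refine of_leaf l hl ⟨?_, h.not_adj_leaves hl hu⟩ ⟨?_, ?_⟩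
    · rintro rfl; exact hpl rfl
    · rintro hlu; exact h.notMem_leaves_of_mem_children (h.parent_mem l hl) (hlu ▸ hu)
    · rw [h.adj_leaf_iff u hu]; exact hpl

lemma depthTwoGlobalDom_of_isGlobalDomSet {S : Finset V} (hS : IsGlobalDomSet G S) :
    DepthTwoGlobalDom v N L p S := by
  obtain ⟨hG, hGc⟩ := hS
  refine ⟨fun l hl => ?_, fun n hn => ?_, ?_, ?_⟩
  · obtain hlS | ⟨x, hxS, hxl⟩ := hG l
    · exact Or.inl hlS
    · exact Or.inr ((h.adj_leaf_iff l hl x).1 hxl ▸ hxS)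
  · obtain hnS | ⟨x, hxS, hxn⟩ := hG n
    · exact Or.inl hnS
    rcases h.eq_or_mem x with rfl | hx | hx
    · exact Or.inr (Or.inl hxS)
    · exact absurd hxn (h.not_adj_children x hx n hn)
    · exact Or.inr (Or.inr ⟨x, hx, ((h.adj_leaf_iff x hx n).1 hxn.symm).symm, hxS⟩)
  · obtain hvS | ⟨x, hxS, hxv⟩ := hG v
    · exact Or.inl hvS
    · exact Or.inr ⟨x, (h.adj_root_iff x).1 hxv.symm, hxS⟩
  · obtain hvS | ⟨x, hxS, hxv⟩ := hGc v
    · exact Or.inl hvS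
    obtain ⟨hxv, hnadj⟩ := (G.compl_adj _ _).1 hxv
    rcases h.eq_or_mem x with rfl | hx | hx
    · exact absurd rfl hxv
    · exact absurd ((h.adj_root_iff x).2 hx).symm hnadj
    · exact Or.inr ⟨x, hx, hxS⟩

lemma isGlobalDomSet_of_depthTwoGlobalDom {S : Finset V} (hS : DepthTwoGlobalDom v N L p S) :
    IsGlobalDomSet G S := by
  refine ⟨fun u => ?_, fun u => ?_⟩
  · rcases h.eq_or_mem u with rfl | hu | hu
    · exact hS.dominates_root.imp_right fun ⟨n, hn, hnS⟩ =>
        ⟨n, hnS, ((h.adj_root_iff n).2 hn).symm⟩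
    · obtain huS | hvS | ⟨c, hc, rfl, hcS⟩ := hS.dominates_children u hu
      · exact Or.inl huS
      · exact Or.inr ⟨_, hvS, (h.adj_root_iff _).2 hu⟩
      · exact Or.inr ⟨c, hcS, ((h.adj_leaf_iff c hc _).2 rfl).symm⟩
    · exact (hS.covers u hu).imp_right fun hpS => ⟨p u, hpS, (h.adj_leaf_iff u hu _).2 rfl⟩
  · by_cases huv : u = v
    · subst huv
      refine hS.codominates_root.imp_right fun ⟨l, hl, hlS⟩ =>
        ⟨l, hlS, (G.compl_adj _ _).2 ⟨h.ne_root_of_mem_leaves hl, fun hlu => ?_⟩⟩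
      exact h.notMem_leaves_of_mem_children ((h.adj_root_iff l).1 hlu.symm) hl
    · exact Or.inr (h.exists_compl_adj_of_covers hS.covers huv)

theorem isGlobalDomSet_iff (S : Finset V) :
    IsGlobalDomSet G S ↔ DepthTwoGlobalDom v N L p S :=
  ⟨h.depthTwoGlobalDom_of_isGlobalDomSet, h.isGlobalDomSet_of_depthTwoGlobalDom⟩

end IsDepthTwoTree

end Layers

section Coalitions

omit [Fintype V]

variable {v : V} {N L : Finset V} {p : V → V}

lemma CoversLeaves.of_union_of_union {A A' W : Finset V} (hAA' : Disjoint A A')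
    (hAL : Disjoint A L) (hA'L : Disjoint A' L) (hA : CoversLeaves L p (A ∪ W))
    (hA' : CoversLeaves L p (A' ∪ W)) : CoversLeaves L p W := by
  intro l hl
  by_contra! hW
  have parent_mem : ∀ X, Disjoint X L → CoversLeaves L p (X ∪ W) → p l ∈ X := fun X hXL hX => by
    rcases hX l hl with hlX | hpX
    · exact ((mem_union.1 hlX).resolve_right hW.1 |> disjoint_left.1 hXL) hl |>.elim
    · exact (mem_union.1 hpX).resolve_right hW.2
  exact disjoint_left.1 hAA' (parent_mem A hAL hA) (parent_mem A' hA'L hA')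

lemma DepthTwoGlobalDom.exists_leaf_mem_right {A B : Finset V}
    (hAB : DepthTwoGlobalDom v N L p (A ∪ B)) (hvA : v ∉ A) (hvB : v ∉ B) (hAL : Disjoint A L) :
    ∃ l ∈ L, l ∈ B := by
  obtain hv | ⟨l, hl, hlAB⟩ := hAB.codominates_root
  · exact ((mem_union.1 hv).elim hvA hvB).elim
  · exact ⟨l, hl, (mem_union.1 hlAB).resolve_left fun hlA => disjoint_left.1 hAL hlA hl⟩

lemma DepthTwoGlobalDom.exists_child_mem_right {A B : Finset V}
    (hAB : DepthTwoGlobalDom v N L p (A ∪ B)) (hvA : v ∉ A) (hvB : v ∉ B) (hAL : Disjoint A L)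
    {n : V} (hn : n ∈ N) (hnA : n ∉ A) (hnB : n ∉ B) : ∃ c ∈ L, p c = n ∧ c ∈ B := by
  obtain hnAB | hv | ⟨c, hc, hpc, hcAB⟩ := hAB.dominates_children n hn
  · exact ((mem_union.1 hnAB).elim hnA hnB).elim
  · exact ((mem_union.1 hv).elim hvA hvB).elim
  · exact ⟨c, hc, hpc, (mem_union.1 hcAB).resolve_left fun hcA => disjoint_left.1 hAL hcA hc⟩

lemma DepthTwoGlobalDom.of_union_of_union {A A' B : Finset V} (hAA' : Disjoint A A')
    (hAL : Disjoint A L) (hA'L : Disjoint A' L) (hvB : v ∈ B)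
    (hA : DepthTwoGlobalDom v N L p (A ∪ B)) (hA' : DepthTwoGlobalDom v N L p (A' ∪ B)) :
    DepthTwoGlobalDom v N L p B :=
  .of_root_mem hvB (hA.covers.of_union_of_union hAA' hAL hA'L hA'.covers)

namespace DepthTwoLayers

variable (h : DepthTwoLayers v N L p)
include h

lemma coversLeaves_of_insert_root {Z : Finset V} (hZ : CoversLeaves L p (insert v Z)) :
    CoversLeaves L p Z := fun l hl =>
  (hZ l hl).imp (fun hlZ => (mem_insert.1 hlZ).resolve_left (h.ne_root_of_mem_leaves hl))
    (fun hpZ => (mem_insert.1 hpZ).resolve_left (h.ne_root_of_mem_children (h.parent_mem l hl)))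

lemma depthTwoGlobalDom_insert_children {u : V} (hu : u = v ∨ u ∈ L) :
    DepthTwoGlobalDom v N L p (insert u N) := by
  obtain ⟨l, hl, -⟩ := h.exists_parent_ne v
  refine ⟨fun l hl => Or.inr (mem_insert_of_mem (h.parent_mem l hl)),
    fun n hn => Or.inl (mem_insert_of_mem hn),
    Or.inr ⟨p l, h.parent_mem l hl, mem_insert_of_mem (h.parent_mem l hl)⟩, ?_⟩
  rcases hu with rfl | hu
  · exact Or.inl (mem_insert_self _ _)
  · exact Or.inr ⟨u, hu, mem_insert_self _ _⟩

end DepthTwoLayers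

end Coalitions

lemma card_le_card_add_card_of_subset_image_union {α β : Type*} [DecidableEq α] {s E : Finset α}
    {t : Finset β} {f : β → α} (h : s ⊆ t.image f ∪ E) : #s ≤ #t + #E :=
  (card_le_card h).trans ((card_union_le _ _).trans (Nat.add_le_add_right card_image_le _))

lemma Finpartition.card_parts_le_card_add_card_filter_disjoint {α : Type*} [DecidableEq α]
    {s : Finset α} (π : Finpartition s) (T : Finset α) :
    #π.parts ≤ #T + #(π.parts.filter (Disjoint · T)) :=
  card_le_card_add_card_of_subset_image_union (f := π.part) fun X hX => by
    by_cases hXT : Disjoint X T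
    · exact mem_union_right _ (mem_filter.2 ⟨hX, hXT⟩)
    obtain ⟨t, htX, htT⟩ := not_disjoint_iff.1 hXT
    exact mem_union_left _ (mem_image.2 ⟨t, htT, π.part_eq_of_mem hX htX⟩)

section Partitions

variable {v : V} {N L : Finset V} {p : V → V} {π : Finpartition (univ : Finset V)}

lemma Finpartition.isGlobalCoalition {G : SimpleGraph V} {A B : Finset V} (hA : A ∈ π.parts)
    (hB : B ∈ π.parts) (hAB : A ≠ B) (hnA : ¬ IsGlobalDomSet G A) (hnB : ¬ IsGlobalDomSet G B)
    (hU : IsGlobalDomSet G (A ∪ B)) : IsGlobalCoalition G A B :=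
  ⟨π.disjoint hA hB hAB, hnA, hnB, hU⟩

theorem IsDepthTwoTree.exists_isGCPartition {G : SimpleGraph V} (h : IsDepthTwoTree G v N L p) :
    ∃ π : Finpartition (univ : Finset V), IsGCPartition G π ∧ #π.parts = #L + 2 := by
  obtain ⟨l, hl, -⟩ := h.exists_parent_ne v
  have hN : N ≠ ⊥ := ne_empty_of_mem (h.parent_mem l hl)
  have hdisj : Disjoint (insert v L) N :=
    disjoint_insert_left.2 ⟨h.root_notMem_children, h.disjoint_children_leaves.symm⟩
  have hsup : insert v L ⊔ N = univ := eq_univ_of_forall fun u => by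
    rcases h.eq_or_mem u with rfl | hu | hu <;> simp [*]
  let π := (⊥ : Finpartition (insert v L)).extend hN hdisj hsup
  have hparts : ∀ X, X ∈ π.parts ↔ X = N ∨ ∃ u ∈ insert v L, {u} = X := fun X => by
    rw [Finpartition.extend_parts, mem_insert, Finpartition.mem_bot_iff]
  have hNπ : N ∈ π.parts := (hparts N).2 (Or.inl rfl)
  have hNnot : ¬ IsGlobalDomSet G N := fun hGD => by
    obtain hv | ⟨l, hl, hlN⟩ := ((h.isGlobalDomSet_iff N).1 hGD).codominates_root
    · exact h.root_notMem_children hv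
    · exact h.notMem_leaves_of_mem_children hlN hl
  have hsingle : ∀ u ∈ insert v L, {u} ∈ π.parts ∧ {u} ≠ N ∧ ¬ IsGlobalDomSet G {u} ∧
      IsGlobalDomSet G ({u} ∪ N) := fun u hu => by
    have huN : u ∉ N := fun huN => disjoint_left.1 hdisj hu huN
    refine ⟨(hparts _).2 (Or.inr ⟨u, hu, rfl⟩), fun e => huN (e ▸ mem_singleton_self u),
      fun hGD => h.not_coversLeaves_singleton huN ((h.isGlobalDomSet_iff _).1 hGD).covers, ?_⟩
    rw [← insert_eq, h.isGlobalDomSet_iff]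
    exact h.depthTwoGlobalDom_insert_children (mem_insert.1 hu)
  refine ⟨π, fun X hX => ?_, ?_⟩
  · rcases (hparts X).1 hX with hXN | ⟨u, hu, rfl⟩
    · rw [hXN]
      obtain ⟨hvπ, hvN, hvnot, hvN_GD⟩ := hsingle v (mem_insert_self v L)
      exact ⟨hNnot, {v}, hvπ, hvN, Finpartition.isGlobalCoalition hNπ hvπ hvN.symm hNnot hvnot
        (union_comm N {v} ▸ hvN_GD)⟩
    · obtain ⟨huπ, huN, hunot, huN_GD⟩ := hsingle u hu
      exact ⟨hunot, N, hNπ, huN.symm, Finpartition.isGlobalCoalition huπ hNπ huN hunot hNnot huN_GD⟩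
  · rw [Finpartition.card_extend, Finpartition.card_bot, card_insert_of_notMem h.root_notMem_leaves]

def leafOwner (π : Finpartition (univ : Finset V)) (p : V → V) (B : Finset V) (l : V) :
    Finset V :=
  π.part (if l ∈ B then p l else l)

lemma DepthTwoLayers.mem_image_leafOwner (h : DepthTwoLayers v N L p) {A B X : Finset V}
    (hA : A ∈ π.parts) (hB : B ∈ π.parts) (hAB : DepthTwoGlobalDom v N L p (A ∪ B))
    (hvA : v ∉ A) (hvB : v ∉ B) (hAL : Disjoint A L) (hX : X ∈ π.parts) (hXA : X ≠ A)
    (hXB : X ≠ B) {x : V} (hxX : x ∈ X) (hxv : x ≠ v) : X ∈ L.image (leafOwner π p B) := by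
  have hxA : x ∉ A := fun hxA => hXA (π.eq_of_mem_parts hX hA hxX hxA)
  have hxB : x ∉ B := fun hxB => hXB (π.eq_of_mem_parts hX hB hxX hxB)
  by_cases hxL : x ∈ L
  · exact mem_image.2 ⟨x, hxL, by simp [leafOwner, hxB, π.part_eq_of_mem hX hxX]⟩
  · obtain ⟨c, hc, rfl, hcB⟩ :=
      hAB.exists_child_mem_right hvA hvB hAL (h.mem_children hxv hxL) hxA hxB
    exact mem_image.2 ⟨c, hc, by simp [leafOwner, hcB, π.part_eq_of_mem hX hxX]⟩

lemma leafOwner_eq_of_coversLeaves {A B X : Finset V} (hA : A ∈ π.parts) (hB : B ∈ π.parts)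
    (hAB : CoversLeaves L p (A ∪ B)) (hAL : Disjoint A L) (hX : X ∈ π.parts) (hXA : X ≠ A)
    (hXB : X ≠ B) (hXL : Disjoint X L) (hXcov : CoversLeaves L p X) {l : V} (hl : l ∈ L) :
    leafOwner π p B l = X := by
  have hpX : p l ∈ X := (hXcov l hl).resolve_left fun hlX => disjoint_left.1 hXL hlX hl
  have hlB : l ∈ B := by
    rcases hAB l hl with hlAB | hpAB
    · exact (mem_union.1 hlAB).resolve_left fun hlA => disjoint_left.1 hAL hlA hl
    · rcases mem_union.1 hpAB with hpA | hpB
      · exact (hXA (π.eq_of_mem_parts hX hA hpX hpA)).elim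
      · exact (hXB (π.eq_of_mem_parts hX hB hpX hpB)).elim
  simp [leafOwner, hlB, π.part_eq_of_mem hX hpX]

namespace DepthTwoLayers

variable (h : DepthTwoLayers v N L p)
include h

lemma mem_image_leafOwner_or_exists_leafOwner_eq_of_coversLeaves (hvπ : {v} ∈ π.parts)
    (hpartner : ∀ X ∈ π.parts, ∃ Y ∈ π.parts, Y ≠ X ∧ DepthTwoGlobalDom v N L p (X ∪ Y))
    {A A' B : Finset V} (hA : A ∈ π.parts) (hA' : A' ∈ π.parts) (hB : B ∈ π.parts)
    (hAA' : A ≠ A') (hBA : B ≠ A) (hBA' : B ≠ A') (hAL : Disjoint A L) (hA'L : Disjoint A' L)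
    (hvA : v ∉ A) (hvA' : v ∉ A') (hAB : CoversLeaves L p (A ∪ B)) (hBcov : CoversLeaves L p B) :
    A ∈ L.image (leafOwner π p B) ∨ ∃ X, ∀ l ∈ L, leafOwner π p B l = X := by
  by_cases hchild : ∃ c ∈ L, p c ∈ A
  · obtain ⟨c, hc, hpA⟩ := hchild
    have hcB : c ∈ B := (hBcov c hc).resolve_right fun hpB => hBA (π.eq_of_mem_parts hB hA hpB hpA)
    exact Or.inl (mem_image.2 ⟨c, hc, by simp [leafOwner, hcB, π.part_eq_of_mem hA hpA]⟩)
  obtain ⟨a, ha⟩ := π.nonempty_of_mem_parts hA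
  have haN : a ∈ N := h.mem_children (fun e => hvA (e ▸ ha)) (disjoint_left.1 hAL ha)
  obtain ⟨B', hB', -, hA'B'⟩ := hpartner A' hA'
  obtain haA'B' | hvA'B' | ⟨c, hc, hpc, -⟩ := hA'B'.dominates_children a haN
  · rcases mem_union.1 haA'B' with haA' | haB'
    · exact (hAA' (π.eq_of_mem_parts hA hA' ha haA')).elim
    · have hB'A : B' = A := π.eq_of_mem_parts hB' hA haB' ha
      obtain ⟨l, hl, hlA⟩ := hA'B'.exists_leaf_mem_right hvA' (hB'A ▸ hvA) hA'L
      exact (disjoint_left.1 hAL (hB'A ▸ hlA) hl).elim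
  · have hB'v : B' = {v} :=
      π.eq_of_mem_parts hB' hvπ ((mem_union.1 hvA'B').resolve_left hvA') (mem_singleton_self v)
    have hA'cov : CoversLeaves L p A' := by
      have hcov := hA'B'.covers
      rw [hB'v, union_comm, ← insert_eq] at hcov
      exact h.coversLeaves_of_insert_root hcov
    exact Or.inr ⟨A', fun l hl =>
      leafOwner_eq_of_coversLeaves hA hB hAB hAL hA' hAA'.symm hBA'.symm hA'L hA'cov hl⟩
  · exact (hchild ⟨c, hc, hpc ▸ ha⟩).elim

lemma mem_image_leafOwner_or_exists_leafOwner_eq (hvπ : {v} ∈ π.parts)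
    (hpartner : ∀ X ∈ π.parts, ∃ Y ∈ π.parts, Y ≠ X ∧ DepthTwoGlobalDom v N L p (X ∪ Y))
    {A A' B : Finset V} (hA : A ∈ π.parts) (hA' : A' ∈ π.parts) (hB : B ∈ π.parts)
    (hAA' : A ≠ A') (hAL : Disjoint A L) (hA'L : Disjoint A' L) (hvA : v ∉ A) (hvA' : v ∉ A')
    (hvB : v ∉ B) (hAB : DepthTwoGlobalDom v N L p (A ∪ B)) :
    A ∈ L.image (leafOwner π p B) ∨ ∃ X, ∀ l ∈ L, leafOwner π p B l = X := by
  obtain ⟨l₀, hl₀, hl₀B⟩ := hAB.exists_leaf_mem_right hvA hvB hAL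
  have hBA : B ≠ A := fun e => disjoint_left.1 hAL (e ▸ hl₀B) hl₀
  have hBA' : B ≠ A' := fun e => disjoint_left.1 hA'L (e ▸ hl₀B) hl₀
  -- Split on the partner `Z` of `{v}`, which has to cover the leaves.
  obtain ⟨Z, hZ, -, hvZ⟩ := hpartner {v} hvπ
  have hZcov : CoversLeaves L p Z := h.coversLeaves_of_insert_root (insert_eq v Z ▸ hvZ.covers)
  by_cases hZA : Z = A
  · subst hZA
    have hpA : p l₀ ∈ Z := (hZcov l₀ hl₀).resolve_left fun hl₀A => disjoint_left.1 hAL hl₀A hl₀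
    exact Or.inl (mem_image.2 ⟨l₀, hl₀, by simp [leafOwner, hl₀B, π.part_eq_of_mem hA hpA]⟩)
  by_cases hZB : Z = B
  · exact h.mem_image_leafOwner_or_exists_leafOwner_eq_of_coversLeaves hvπ hpartner hA hA' hB hAA'
      hBA hBA' hAL hA'L hvA hvA' hAB.covers (hZB ▸ hZcov)
  obtain ⟨a, ha⟩ := π.nonempty_of_mem_parts hA'
  have haN : a ∈ N := h.mem_children (fun e => hvA' (e ▸ ha)) (disjoint_left.1 hA'L ha)
  obtain ⟨c, hc, rfl, hcB⟩ := hAB.exists_child_mem_right hvA hvB hAL haN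
    (fun haA => hAA' (π.eq_of_mem_parts hA hA' haA ha))
    (fun haB => hBA' (π.eq_of_mem_parts hB hA' haB ha))
  have hZA' : Z = A' := by
    rcases hZcov c hc with hcZ | hpZ
    · exact (hZB (π.eq_of_mem_parts hZ hB hcZ hcB)).elim
    · exact π.eq_of_mem_parts hZ hA' hpZ ha
  exact Or.inr ⟨Z, fun l hl =>
    leafOwner_eq_of_coversLeaves hA hB hAB.covers hAL hZ hZA hZB (hZA' ▸ hA'L) hZcov hl⟩

lemma card_parts_le_of_partner
    (hpartner : ∀ X ∈ π.parts, ∃ Y ∈ π.parts, Y ≠ X ∧ DepthTwoGlobalDom v N L p (X ∪ Y))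
    {A A' B : Finset V} (hA : A ∈ π.parts) (hA' : A' ∈ π.parts) (hB : B ∈ π.parts)
    (hAA' : A ≠ A') (hAL : Disjoint A L) (hA'L : Disjoint A' L) (hvA : v ∉ A) (hvA' : v ∉ A')
    (hvB : v ∉ B) (hAB : DepthTwoGlobalDom v N L p (A ∪ B)) : #π.parts ≤ #L + 2 := by
  set P := π.part v
  have hP : P ∈ π.parts := π.part_mem.2 (mem_univ v)
  have hvP : v ∈ P := π.mem_part_self.2 (mem_univ v)
  have hcover : ∀ X ∈ π.parts, X ≠ A → X ≠ B → ∀ x ∈ X, x ≠ v →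
      X ∈ L.image (leafOwner π p B) := fun X hX hXA hXB x hxX hxv =>
    h.mem_image_leafOwner hA hB hAB hvA hvB hAL hX hXA hXB hxX hxv
  have hsub : ∀ E : Finset (Finset V), {A, B, P} ⊆ L.image (leafOwner π p B) ∪ E →
      π.parts ⊆ L.image (leafOwner π p B) ∪ E := fun E hE X hX => by
    by_cases hXABP : X = A ∨ X = B ∨ X = P
    · exact hE (by simpa using hXABP)
    simp only [not_or] at hXABP
    obtain ⟨x, hxX⟩ := π.nonempty_of_mem_parts hX
    exact mem_union_left _ (hcover X hX hXABP.1 hXABP.2.1 x hxX fun e =>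
      hXABP.2.2 (π.eq_of_mem_parts hX hP (e ▸ hxX) hvP))
  by_cases hPo : P ∈ L.image (leafOwner π p B)
  · have := card_le_card_add_card_of_subset_image_union (hsub {A, B} (by grind))
    have := card_le_two (a := A) (b := B)
    omega
  have hPv : P = {v} := eq_singleton_iff_unique_mem.2 ⟨hvP, fun x hxP => by
    by_contra hxv
    exact hPo (hcover P hP (fun e => hvA (e ▸ hvP)) (fun e => hvB (e ▸ hvP)) x hxP hxv)⟩
  rcases h.mem_image_leafOwner_or_exists_leafOwner_eq (hPv ▸ hP) hpartner hA hA' hB hAA'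
      hAL hA'L hvA hvA' hvB hAB with hAo | ⟨X, hX⟩
  · have := card_le_card_add_card_of_subset_image_union (hsub {B, P} (by grind))
    have := card_le_two (a := B) (b := P)
    omega
  · have hXo : L.image (leafOwner π p B) ⊆ {X} := fun Y hY => by
      obtain ⟨l, hl, rfl⟩ := mem_image.1 hY
      exact mem_singleton.2 (hX l hl)
    have := (card_le_card ((hsub {A, B, P} subset_union_right).trans
      (union_subset_union_left hXo))).trans (card_union_le _ _)
    have := card_le_three (a := A) (b := B) (c := P)
    have := h.two_le_card_leaves
    rw [card_singleton] at *
    omega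

theorem card_parts_le (hnot : ∀ X ∈ π.parts, ¬ DepthTwoGlobalDom v N L p X)
    (hpartner : ∀ X ∈ π.parts, ∃ Y ∈ π.parts, Y ≠ X ∧ DepthTwoGlobalDom v N L p (X ∪ Y)) :
    #π.parts ≤ #L + 2 := by
  have hcount := π.card_parts_le_card_add_card_filter_disjoint (insert v L)
  rw [card_insert_of_notMem h.root_notMem_leaves] at hcount
  by_cases hM : #(π.parts.filter (Disjoint · (insert v L))) ≤ 1
  · omega
  obtain ⟨A, hAM, A', hA'M, hAA'⟩ := one_lt_card.1 (not_le.1 hM)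
  simp only [mem_filter, disjoint_insert_right] at hAM hA'M
  obtain ⟨hA, hvA, hAL⟩ := hAM
  obtain ⟨hA', hvA', hA'L⟩ := hA'M
  obtain ⟨B, hB, -, hAB⟩ := hpartner A hA
  obtain ⟨B', hB', -, hA'B'⟩ := hpartner A' hA'
  by_cases hvBB' : v ∈ B ∧ v ∈ B'
  · have hBB' : B' = B := π.eq_of_mem_parts hB' hB hvBB'.2 hvBB'.1
    exact (hnot B hB (hAB.of_union_of_union (π.disjoint hA hA' hAA') hAL hA'L hvBB'.1
      (hBB' ▸ hA'B'))).elim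
  rcases not_and_or.1 hvBB' with hvB | hvB'
  · exact h.card_parts_le_of_partner hpartner hA hA' hB hAA' hAL hA'L hvA hvA' hvB hAB
  · exact h.card_parts_le_of_partner hpartner hA' hA hB' hAA'.symm hA'L hAL hvA' hvA hvB' hA'B'

end DepthTwoLayers

theorem IsDepthTwoTree.card_parts_le_of_isGCPartition {G : SimpleGraph V}
    (h : IsDepthTwoTree G v N L p) (hπ : IsGCPartition G π) : #π.parts ≤ #L + 2 :=
  h.toDepthTwoLayers.card_parts_le (fun X hX hD => (hπ X hX).1 ((h.isGlobalDomSet_iff X).2 hD))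
    fun X hX => by
      obtain ⟨-, Y, hY, hYX, -, -, -, hU⟩ := hπ X hX
      exact ⟨Y, hY, hYX, (h.isGlobalDomSet_iff _).1 hU⟩

end Partitions

section Tree

omit [Fintype V] [DecidableEq V]

variable {G : SimpleGraph V}

lemma SimpleGraph.IsAcyclic.eq_of_adj_of_adj (hG : G.IsAcyclic) {u w x y : V} (huw : u ≠ w)
    (hux : G.Adj u x) (hxw : G.Adj x w) (huy : G.Adj u y) (hyw : G.Adj y w) : x = y := by
  have := (hG.subsingleton_path u w).elim
    ⟨.cons hux (.cons hxw .nil), by simp [*, hux.ne, hxw.ne]⟩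
    ⟨.cons huy (.cons hyw .nil), by simp [*, huy.ne, hyw.ne]⟩
  simp only [Subtype.mk.injEq, Walk.cons.injEq] at this
  exact this.1

lemma SimpleGraph.Connected.exists_adj_adj_of_dist_eq_two (hG : G.Connected) {u w : V}
    (huw : G.dist u w = 2) : ∃ x, G.Adj u x ∧ G.Adj x w := by
  obtain ⟨q, hq⟩ := hG.exists_walk_length_eq_dist u w
  rw [huw] at hq
  refine ⟨q.getVert 1, ?_, ?_⟩
  · simpa using q.adj_getVert_succ (i := 0) (by omega)
  · simpa [← hq] using q.adj_getVert_succ (i := 1) (by omega)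

lemma SimpleGraph.dist_le_two_of_adj_adj {u x w : V} (hux : G.Adj u x) (hxw : G.Adj x w) :
    G.dist u w ≤ 2 := by
  simpa using dist_le (.cons hux (.cons hxw .nil))

end Tree

omit [DecidableEq V] in
theorem SimpleGraph.IsTree.isDepthTwoTree {G : SimpleGraph V} (hG : G.IsTree) {v : V}
    (hv : ∀ u, G.dist v u ≤ 2) {a b : V} (hab : G.dist a b = 4) :
    ∃ p, IsDepthTwoTree G v (univ.filter fun u => G.dist v u = 1)
      (univ.filter fun u => G.dist v u = 2) p := by
  set N := univ.filter fun u => G.dist v u = 1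
  set L := univ.filter fun u => G.dist v u = 2
  have hN : ∀ u, u ∈ N ↔ G.Adj v u := fun u => by simp [N, dist_eq_one_iff_adj]
  have hL : ∀ u, u ∈ L ↔ G.dist v u = 2 := fun u => by simp [L]
  choose p hp using fun l => (em (l ∈ L)).elim
    (fun hl => (hG.connected.exists_adj_adj_of_dist_eq_two ((hL l).1 hl)).imp fun _ h _ => h)
    (fun hl => ⟨v, fun hl' => (hl hl').elim⟩)
  have mem_N_of_adj : ∀ l ∈ L, ∀ x, G.Adj x l → x ∈ N := fun l hl x hxl => by
    have := hG.dist_eq_dist_add_one_of_adj v hxl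
    have := hv x
    rw [hN, ← dist_eq_one_iff_adj]
    rw [(hL l).1 hl] at *
    omega
  refine ⟨p, ⟨⟨fun u => ?_, by simp [N], by simp [L], ?_,
    fun l hl => (hN _).2 (hp l hl).1, fun w => ?_⟩, fun u => (hN u).symm, ?_, ?_⟩⟩
  · obtain h0 | h12 : G.dist v u = 0 ∨ G.dist v u = 1 ∨ G.dist v u = 2 := by have := hv u; omega
    · exact Or.inl (hG.connected.dist_eq_zero_iff.1 h0).symm
    · exact Or.inr (by simpa [N, L] using h12)
  · exact disjoint_filter.2 fun u _ h1 h2 => by omega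
  · have htri := hG.connected.dist_triangle (u := a) (v := v) (w := b)
    rw [show G.dist a v = G.dist v a from dist_comm] at htri
    have haL : a ∈ L := (hL a).2 (by have := hv a; have := hv b; omega)
    have hbL : b ∈ L := (hL b).2 (by have := hv a; have := hv b; omega)
    by_contra! hpw
    have := dist_le_two_of_adj_adj (hp a haL).2.symm ((hpw a haL).trans (hpw b hbL).symm ▸
      (hp b hbL).2)
    omega
  · intro n hn n' hn' hadj
    simp only [N, mem_filter, mem_univ, true_and] at hn hn'
    exact hG.dist_ne_of_adj v hadj (hn.trans hn'.symm)
  · intro l hl x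
    refine ⟨fun hxl => hG.isAcyclic.eq_of_adj_of_adj ?_ ((hN x).1 (mem_N_of_adj l hl x hxl)) hxl
      (hp l hl).1 (hp l hl).2, fun hx => hx ▸ (hp l hl).2⟩
    rintro rfl
    simp [L] at hl

section Eccentricity

omit [DecidableEq V]

lemma dist_le_eccentricity (G : SimpleGraph V) (v u : V) : G.dist v u ≤ eccentricity G v :=
  le_sup (f := fun u => G.dist v u) (mem_univ u)

lemma exists_dist_eq_graphDiam (G : SimpleGraph V) [Nonempty V] :
    ∃ a b, G.dist a b = graphDiam G := by
  obtain ⟨a, -, ha⟩ := exists_mem_eq_sup univ univ_nonempty (eccentricity G)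
  obtain ⟨b, -, hb⟩ := exists_mem_eq_sup univ univ_nonempty fun u => G.dist a u
  exact ⟨a, b, by rw [graphDiam, ha, eccentricity, hb]⟩

end Eccentricity

theorem gc_tree_radius_two_diam_four_general (G : SimpleGraph V) (ht : G.IsTree)
    (hd : graphDiam G = 4)
    (v : V) (hv : eccentricity G v = 2) :
    globalCoalitionNumber G = (Finset.univ.filter fun u => G.dist v u = 2).card + 2 := by
  have : Nonempty V := ⟨v⟩
  obtain ⟨a, b, hab⟩ := exists_dist_eq_graphDiam G
  obtain ⟨p, hT⟩ := ht.isDepthTwoTree (fun u => hv ▸ dist_le_eccentricity G v u) (hab.trans hd)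
  obtain ⟨π, hπ, hcard⟩ := hT.exists_isGCPartition
  exact IsGreatest.csSup_eq ⟨⟨π, hπ, hcard⟩, fun n ⟨π', hπ', hn⟩ =>
    hn ▸ hT.card_parts_le_of_isGCPartition hπ'⟩

theorem gc_tree_radius_two_diam_four (G : SimpleGraph V) (ht : G.IsTree)
    (hr : graphRadius G = 2) (hd : graphDiam G = 4)
    (v : V) (hv : eccentricity G v = 2) (hvu : ∀ w : V, eccentricity G w = 2 → w = v) :
    globalCoalitionNumber G = (Finset.univ.filter fun u => G.dist v u = 2).card + 2 :=
  gc_tree_radius_two_diam_four_general G ht hd v hv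
end

section
/- Let T = S_{p,q} be the double star with p ≥ q ≥ 1 and T ≠ P₄ (equivalently, (p,q) ≠ (1,1)). Then GC(T) = p + 2. -/
open SimpleGraph Finset

variable {V : Type*} [Fintype V] [DecidableEq V]

/-- The double star `S_{p,q}`: two adjacent centers (`Sum.inl none` and `Sum.inr none`), the
first adjacent to `p` leaves and the second to `q` leaves. -/
def doubleStar (p q : ℕ) : SimpleGraph (Option (Fin p) ⊕ Option (Fin q)) :=
  SimpleGraph.fromRel fun u v =>
    (u = Sum.inl none ∧ v = Sum.inr none) ∨
    (u = Sum.inl none ∧ ∃ i : Fin p, v = Sum.inl (some i)) ∨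
    (u = Sum.inr none ∧ ∃ j : Fin q, v = Sum.inr (some j))


section GCAux

variable {p q : ℕ}

lemma gds_iff (hp : 1 ≤ p) (hq : 1 ≤ q) (S : Finset (Option (Fin p) ⊕ Option (Fin q))) :
    IsGlobalDomSet (doubleStar p q) S ↔
      ((Sum.inl none ∈ S ∨ ∀ i : Fin p, Sum.inl (some i) ∈ S) ∧
       (Sum.inl none ∈ S ∨ ∃ j : Fin q, Sum.inr (some j) ∈ S) ∧
       (Sum.inr none ∈ S ∨ ∀ j : Fin q, Sum.inr (some j) ∈ S) ∧
       (Sum.inr none ∈ S ∨ ∃ i : Fin p, Sum.inl (some i) ∈ S)) := by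
  obtain ⟨i0, -⟩ := Finset.card_pos.mp (by simp only [Finset.card_univ, Fintype.card_fin]; omega : 0 < (Finset.univ : Finset (Fin p)).card)
  obtain ⟨j0, -⟩ := Finset.card_pos.mp (by simp only [Finset.card_univ, Fintype.card_fin]; omega : 0 < (Finset.univ : Finset (Fin q)).card)
  constructor
  · rintro ⟨hT, hC⟩
    refine ⟨?_, ?_, ?_, ?_⟩
    · by_cases h1 : Sum.inl none ∈ S
      · exact Or.inl h1
      · refine Or.inr fun i => ?_
        rcases hT (Sum.inl (some i)) with h | ⟨u, hu, hadj⟩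
        · exact h
        · rcases u with (_ | i') | (_ | j') <;> simp [doubleStar] at hadj
          · exact absurd hu h1
    · rcases hC (Sum.inl none) with h | ⟨u, hu, hadj⟩
      · exact Or.inl h
      · rw [compl_adj] at hadj
        rcases u with (_ | i') | (_ | j') <;> simp [doubleStar] at hadj
        · exact Or.inr ⟨_, hu⟩
    · by_cases h2 : Sum.inr none ∈ S
      · exact Or.inl h2
      · refine Or.inr fun j => ?_
        rcases hT (Sum.inr (some j)) with h | ⟨u, hu, hadj⟩
        · exact h
        · rcases u with (_ | i') | (_ | j') <;> simp [doubleStar] at hadj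
          · exact absurd hu h2
    · rcases hC (Sum.inr none) with h | ⟨u, hu, hadj⟩
      · exact Or.inl h
      · rw [compl_adj] at hadj
        rcases u with (_ | i') | (_ | j') <;> simp [doubleStar] at hadj
        · exact Or.inr ⟨_, hu⟩
  · rintro ⟨h1, h2, h3, h4⟩
    constructor
    · rintro ((_ | i) | (_ | j))
      · -- c1
        rcases h4 with h | ⟨i, hi⟩
        · exact Or.inr ⟨Sum.inr none, h, by simp [doubleStar]⟩
        · exact Or.inr ⟨Sum.inl (some i), hi, by simp [doubleStar]⟩
      · -- leaf L1
        rcases h1 with h | h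
        · exact Or.inr ⟨Sum.inl none, h, by simp [doubleStar]⟩
        · exact Or.inl (h i)
      · -- c2
        rcases h2 with h | ⟨j, hj⟩
        · exact Or.inr ⟨Sum.inl none, h, by simp [doubleStar]⟩
        · exact Or.inr ⟨Sum.inr (some j), hj, by simp [doubleStar]⟩
      · -- leaf L2
        rcases h3 with h | h
        · exact Or.inr ⟨Sum.inr none, h, by simp [doubleStar]⟩
        · exact Or.inl (h j)
    · rintro ((_ | i) | (_ | j))
      · -- c1 in complement: neighbors are L2
        rcases h2 with h | ⟨j, hj⟩
        · exact Or.inl h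
        · exact Or.inr ⟨Sum.inr (some j), hj, by rw [compl_adj]; simp [doubleStar]⟩
      · -- leaf ℓ ∈ L1 : nonneighbors: everything except c1, ℓ
        rcases h3 with h | h
        · exact Or.inr ⟨Sum.inr none, h, by rw [compl_adj]; simp [doubleStar]⟩
        · exact Or.inr ⟨Sum.inr (some j0), h j0, by rw [compl_adj]; simp [doubleStar]⟩
      · -- c2: complement neighbors L1
        rcases h4 with h | ⟨i, hi⟩
        · exact Or.inl h
        · exact Or.inr ⟨Sum.inl (some i), hi, by rw [compl_adj]; simp [doubleStar]⟩
      · -- leaf ∈ L2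
        rcases h1 with h | h
        · exact Or.inr ⟨Sum.inl none, h, by rw [compl_adj]; simp [doubleStar]⟩
        · exact Or.inr ⟨Sum.inl (some i0), h i0, by rw [compl_adj]; simp [doubleStar]⟩

lemma lower (hp : 1 ≤ p) (hq : 1 ≤ q) :
    ∃ π : Finpartition (Finset.univ : Finset (Option (Fin p) ⊕ Option (Fin q))),
      IsGCPartition (doubleStar p q) π ∧ π.parts.card = p + 2 := by
  set W := Option (Fin p) ⊕ Option (Fin q)
  set C : Finset W := insert (Sum.inl none) (univ.image fun j : Fin q => Sum.inr (some j)) with hC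
  set D : Finset W := {Sum.inr none} with hD
  set parts : Finset (Finset W) :=
    insert C (insert D (univ.image fun i : Fin p => ({Sum.inl (some i)} : Finset W))) with hparts
  have memC : ∀ x : W, x ∈ C ↔ (x = Sum.inl none ∨ ∃ j : Fin q, x = Sum.inr (some j)) := by
    intro x; simp [hC, eq_comm]
  have c1C : Sum.inl none ∈ C := (memC _).mpr (Or.inl rfl)
  have hCD : Disjoint C D := by
    rw [Finset.disjoint_left]; intro x hx hx'
    rw [hD, Finset.mem_singleton] at hx'
    subst hx'
    rcases (memC _).mp hx with h | ⟨j, h⟩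
    · exact Sum.inr_ne_inl h
    · exact Option.some_ne_none j (Sum.inr.inj h).symm
  have hCi : ∀ i : Fin p, Disjoint ({Sum.inl (some i)} : Finset W) C := by
    intro i; rw [Finset.disjoint_left]; intro x hx hx'
    rw [Finset.mem_singleton] at hx
    subst hx
    rcases (memC _).mp hx' with h | ⟨j, h⟩
    · exact Option.some_ne_none i (Sum.inl.inj h)
    · exact Sum.inl_ne_inr h
  have hDi : ∀ i : Fin p, Disjoint D ({Sum.inl (some i)} : Finset W) := by
    intro i; rw [hD, Finset.disjoint_singleton]; simp
  have hmemparts : ∀ A : Finset W, A ∈ parts ↔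
      (A = C ∨ A = D ∨ ∃ i : Fin p, A = {Sum.inl (some i)}) := by
    intro A; simp [hparts, eq_comm]
  have hCD' : C ≠ D := fun h => by
    have := c1C; rw [h, hD, Finset.mem_singleton] at this; exact absurd this (by simp)
  have hCi' : ∀ i : Fin p, C ≠ {Sum.inl (some i)} := fun i h => by
    have := c1C; rw [h, Finset.mem_singleton] at this; exact absurd this (by simp)
  -- not GDS facts
  have hCn : ¬ IsGlobalDomSet (doubleStar p q) C := by
    rw [gds_iff hp hq]
    rintro ⟨-, -, -, h4 | ⟨i, hi⟩⟩
    · rcases (memC _).mp h4 with h | ⟨j, h⟩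
      · exact Sum.inr_ne_inl h
      · exact Option.some_ne_none j (Sum.inr.inj h).symm
    · rcases (memC _).mp hi with h | ⟨j, h⟩
      · exact Option.some_ne_none i (Sum.inl.inj h)
      · exact Sum.inl_ne_inr h
  have hDn : ¬ IsGlobalDomSet (doubleStar p q) D := by
    rw [gds_iff hp hq]
    rintro ⟨-, h2 | ⟨j, hj⟩, -, -⟩
    · rw [hD, Finset.mem_singleton] at h2; exact Sum.inl_ne_inr h2
    · rw [hD, Finset.mem_singleton] at hj; exact Option.some_ne_none j (Sum.inr.inj hj)
  have hin : ∀ i : Fin p, ¬ IsGlobalDomSet (doubleStar p q) ({Sum.inl (some i)} : Finset W) := by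
    intro i
    rw [gds_iff hp hq]
    rintro ⟨-, h2 | ⟨j, hj⟩, -, -⟩
    · rw [Finset.mem_singleton] at h2; exact Option.some_ne_none i (Sum.inl.inj h2).symm
    · rw [Finset.mem_singleton] at hj; exact Sum.inr_ne_inl hj
  have hCDu : IsGlobalDomSet (doubleStar p q) (C ∪ D) := by
    rw [gds_iff hp hq]
    refine ⟨Or.inl ?_, Or.inl ?_, Or.inl ?_, Or.inl ?_⟩ <;>
      simp [hC, hD]
  have hCiu : ∀ i : Fin p, IsGlobalDomSet (doubleStar p q) (C ∪ ({Sum.inl (some i)} : Finset W)) := by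
    intro i
    rw [gds_iff hp hq]
    refine ⟨Or.inl ?_, Or.inl ?_, Or.inr fun j => ?_, Or.inr ⟨i, ?_⟩⟩ <;>
      simp [hC, hD]
  refine ⟨⟨parts, ?_, ?_, ?_⟩, ?_, ?_⟩
  · -- supIndep
    rw [Finset.supIndep_iff_pairwiseDisjoint]
    intro A hA B hB hne
    rcases (hmemparts A).mp hA with rfl | rfl | ⟨i, rfl⟩ <;>
      rcases (hmemparts B).mp hB with rfl | rfl | ⟨i', rfl⟩
    · exact absurd rfl hne
    · exact hCD
    · exact (hCi i').symm
    · exact hCD.symm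
    · exact absurd rfl hne
    · exact hDi i'
    · exact hCi i
    · exact (hDi i).symm
    · refine Finset.disjoint_singleton.mpr fun h => hne ?_
      rw [Finset.singleton_inj]
      exact h
  · -- sup parts = univ
    apply Finset.Subset.antisymm
    · intro x hx; exact Finset.mem_univ x
    · intro x _
      rw [Finset.mem_sup]
      rcases x with (_ | i) | (_ | j)
      · exact ⟨C, by rw [hmemparts]; exact Or.inl rfl, c1C⟩
      · exact ⟨{Sum.inl (some i)}, by rw [hmemparts]; exact Or.inr (Or.inr ⟨i, rfl⟩), by simp⟩
      · exact ⟨D, by rw [hmemparts]; exact Or.inr (Or.inl rfl), by simp [hD]⟩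
      · exact ⟨C, by rw [hmemparts]; exact Or.inl rfl, (memC _).mpr (Or.inr ⟨j, rfl⟩)⟩
  · -- bot not mem
    intro h
    rcases (hmemparts ⊥).mp h with h' | h' | ⟨i, h'⟩
    · exact Finset.ne_empty_of_mem c1C h'.symm
    · exact Finset.ne_empty_of_mem (Finset.mem_singleton_self _ : Sum.inr none ∈ D) h'.symm
    · exact Finset.ne_empty_of_mem (Finset.mem_singleton_self _) h'.symm
  · -- IsGCPartition
    intro A hA
    rcases (hmemparts A).mp hA with rfl | rfl | ⟨i, rfl⟩
    · exact ⟨hCn, D, (hmemparts D).mpr (Or.inr (Or.inl rfl)), fun h => hCD' h.symm,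
        hCD, hCn, hDn, hCDu⟩
    · refine ⟨hDn, C, (hmemparts C).mpr (Or.inl rfl), hCD', hCD.symm, hDn, hCn, ?_⟩
      rw [Finset.union_comm]; exact hCDu
    · exact ⟨hin i, C, (hmemparts C).mpr (Or.inl rfl), hCi' i, hCi i, hin i, hCn,
        by rw [Finset.union_comm]; exact hCiu i⟩

  · -- card
    show parts.card = p + 2
    have h1 : Function.Injective (fun i : Fin p => ({Sum.inl (some i)} : Finset W)) := by
      intro a b hab
      rw [Finset.singleton_inj] at hab
      simpa using hab
    have h2 : D ∉ univ.image fun i : Fin p => ({Sum.inl (some i)} : Finset W) := by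
      intro h
      rw [Finset.mem_image] at h
      obtain ⟨i, -, hi⟩ := h
      have : Sum.inr none ∈ ({Sum.inl (some i)} : Finset W) := by
        rw [hi]; exact Finset.mem_singleton_self _
      rw [Finset.mem_singleton] at this; exact absurd this (by simp)
    have h3 : C ∉ insert D (univ.image fun i : Fin p => ({Sum.inl (some i)} : Finset W)) := by
      intro h
      rw [Finset.mem_insert, Finset.mem_image] at h
      rcases h with h | ⟨i, -, hi⟩
      · exact hCD' h
      · exact hCi' i hi.symm
    rw [hparts, Finset.card_insert_of_notMem h3, Finset.card_insert_of_notMem h2,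
      Finset.card_image_of_injective _ h1, Finset.card_univ, Fintype.card_fin]

lemma upper (hp2 : 2 ≤ p) (hq : 1 ≤ q) (hqp : q ≤ p)
    (π : Finpartition (Finset.univ : Finset (Option (Fin p) ⊕ Option (Fin q))))
    (h : IsGCPartition (doubleStar p q) π) : π.parts.card ≤ p + 2 := by
  have hp : 1 ≤ p := le_trans (by norm_num) hp2
  set W := Option (Fin p) ⊕ Option (Fin q) with hW
  set L1 : Finset W := univ.image (fun i : Fin p => Sum.inl (some i)) with hL1
  set L2 : Finset W := univ.image (fun j : Fin q => Sum.inr (some j)) with hL2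
  have memL1 : ∀ x : W, x ∈ L1 ↔ ∃ i : Fin p, x = Sum.inl (some i) := by
    intro x; simp [hL1, eq_comm]
  have memL2 : ∀ x : W, x ∈ L2 ↔ ∃ j : Fin q, x = Sum.inr (some j) := by
    intro x; simp [hL2, eq_comm]
  have cardL1 : L1.card = p := by
    rw [hL1, Finset.card_image_of_injective, Finset.card_univ, Fintype.card_fin]
    intro a b hab; exact Option.some.inj (Sum.inl.inj hab)
  have cardL2 : L2.card = q := by
    rw [hL2, Finset.card_image_of_injective, Finset.card_univ, Fintype.card_fin]
    intro a b hab; exact Option.some.inj (Sum.inr.inj hab)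
  set N : Finset (Finset W) := π.parts.filter
    (fun A => Sum.inl none ∉ A ∧ Sum.inr none ∉ A) with hN
  have hNsub : N ⊆ π.parts := Finset.filter_subset _ _
  -- key counting lemma
  have key : ∀ (S : Finset (Finset W)) (T : Finset W), S ⊆ π.parts →
      (∀ A ∈ S, (A ∩ T).Nonempty) → S.card ≤ T.card := by
    intro S T hS hne
    have hdisj : (S : Set (Finset W)).PairwiseDisjoint (· ∩ T) := by
      intro A hA B hB hAB
      exact (π.disjoint (hS hA) (hS hB) hAB).mono inf_le_left inf_le_left
    calc S.card ≤ (S.biUnion (· ∩ T)).card := Finset.card_le_card_biUnion hdisj hne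
      _ ≤ T.card := Finset.card_le_card (by
          intro x hx
          rw [Finset.mem_biUnion] at hx
          obtain ⟨A, -, hx⟩ := hx
          exact (Finset.mem_inter.mp hx).2)
  -- parts in N are subsets of L1 ∪ L2
  have hNmem : ∀ A ∈ N, ∀ x ∈ A, x ∈ L1 ∨ x ∈ L2 := by
    intro A hA x hx
    rw [hN, Finset.mem_filter] at hA
    rcases x with (_ | i) | (_ | j)
    · exact absurd hx hA.2.1
    · exact Or.inl ((memL1 _).mpr ⟨i, rfl⟩)
    · exact absurd hx hA.2.2
    · exact Or.inr ((memL2 _).mpr ⟨j, rfl⟩)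
  -- main bound on N
  have hNcard : N.card ≤ p := by
    by_cases hall : ∀ A ∈ N, (A ∩ L1).Nonempty
    · exact (key N L1 hNsub hall).trans_eq cardL1
    · push_neg at hall
      obtain ⟨P0, hP0N, hP0e⟩ := hall
      have hP0p : P0 ∈ π.parts := hNsub hP0N
      have hP0c1 : Sum.inl none ∉ P0 := ((Finset.mem_filter.mp hP0N).2).1
      have hP0c2 : Sum.inr none ∉ P0 := ((Finset.mem_filter.mp hP0N).2).2
      have hP0L2 : ∀ x ∈ P0, ∃ j : Fin q, x = Sum.inr (some j) := by
        intro x hx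
        rcases hNmem P0 hP0N x hx with h' | h'
        · exfalso
          exact Finset.notMem_empty x (hP0e ▸ Finset.mem_inter.mpr ⟨hx, h'⟩)
        · exact (memL2 x).mp h'
      have hP0L1 : ∀ i : Fin p, Sum.inl (some i) ∉ P0 := by
        intro i hi
        obtain ⟨j, hj⟩ := hP0L2 _ hi
        exact Sum.inl_ne_inr hj
      obtain ⟨hP0n, Q0, hQ0p, hQ0ne, hdisj0, -, hQ0n, hGDS⟩ := h P0 hP0p
      rw [gds_iff hp hq] at hGDS
      obtain ⟨g1, g2, g3, g4⟩ := hGDS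
      obtain ⟨x0, hx0⟩ := π.nonempty_of_mem_parts hP0p
      by_cases hc1 : Sum.inl none ∈ Q0
      · -- Case A : Q0 contains the first center
        have hc2 : Sum.inr none ∉ Q0 := by
          intro hc2
          exact hQ0n ((gds_iff hp hq Q0).mpr
            ⟨Or.inl hc1, Or.inl hc1, Or.inl hc2, Or.inl hc2⟩)
        have F2 : ∀ j : Fin q, Sum.inr (some j) ∈ P0 ∪ Q0 := by
          rcases g3 with h' | h'
          · rw [Finset.mem_union] at h'
            rcases h' with h' | h'
            · exact absurd h' hP0c2
            · exact absurd h' hc2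
          · exact h'
        have E1 : ∃ i : Fin p, Sum.inl (some i) ∈ Q0 := by
          rcases g4 with h' | ⟨i, hi⟩
          · rw [Finset.mem_union] at h'
            rcases h' with h' | h'
            · exact absurd h' hP0c2
            · exact absurd h' hc2
          · rw [Finset.mem_union] at hi
            rcases hi with hi | hi
            · exact absurd hi (hP0L1 i)
            · exact ⟨i, hi⟩
        have hQ0notN : Q0 ∉ N := by
          intro hQ0N
          exact ((Finset.mem_filter.mp hQ0N).2).1 hc1
        have claim : ∀ A ∈ N.erase P0, (A ∩ L1).Nonempty := by
          intro A hA
          have hAne : A ≠ P0 := Finset.ne_of_mem_erase hA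
          have hAN : A ∈ N := Finset.mem_of_mem_erase hA
          have hAp : A ∈ π.parts := hNsub hAN
          by_contra hAe
          rw [Finset.not_nonempty_iff_eq_empty] at hAe
          obtain ⟨y, hy⟩ := π.nonempty_of_mem_parts hAp
          obtain ⟨j, rfl⟩ : ∃ j : Fin q, y = Sum.inr (some j) := by
            rcases hNmem A hAN y hy with h' | h'
            · exact absurd (hAe ▸ Finset.mem_inter.mpr ⟨hy, h'⟩) (Finset.notMem_empty y)
            · exact (memL2 y).mp h'
          rcases Finset.mem_union.mp (F2 j) with h' | h'
          · exact hAne (π.eq_of_mem_parts hAp hP0p hy h')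
          · have := π.eq_of_mem_parts hAp hQ0p hy h'
            rw [this] at hAN
            exact hQ0notN hAN
        obtain ⟨i1, hi1⟩ := E1
        have hS : (insert Q0 (N.erase P0)).card ≤ p := by
          refine (key _ L1 ?_ ?_).trans_eq cardL1
          · intro A hA
            rcases Finset.mem_insert.mp hA with rfl | hA
            · exact hQ0p
            · exact hNsub (Finset.mem_of_mem_erase hA)
          · intro A hA
            rcases Finset.mem_insert.mp hA with rfl | hA
            · exact ⟨Sum.inl (some i1), Finset.mem_inter.mpr ⟨hi1, (memL1 _).mpr ⟨i1, rfl⟩⟩⟩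
            · exact claim A hA
        have : Q0 ∉ N.erase P0 := fun h' => hQ0notN (Finset.mem_of_mem_erase h')
        rw [Finset.card_insert_of_notMem this] at hS
        have := Finset.card_erase_add_one hP0N
        omega
      · -- Case B : c1 ∉ Q0, so L1 ⊆ Q0
        have F1 : ∀ i : Fin p, Sum.inl (some i) ∈ Q0 := by
          rcases g1 with h' | h'
          · rw [Finset.mem_union] at h'
            rcases h' with h' | h'
            · exact absurd h' hP0c1
            · exact absurd h' hc1
          · intro i
            rcases Finset.mem_union.mp (h' i) with h'' | h''
            · exact absurd h'' (hP0L1 i)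
            · exact h''
        have hL1Q0 : ∀ A ∈ N, (A ∩ L1).Nonempty → A = Q0 := by
          intro A hAN ⟨y, hy⟩
          rw [Finset.mem_inter] at hy
          obtain ⟨i, rfl⟩ := (memL1 y).mp hy.2
          exact π.eq_of_mem_parts (hNsub hAN) hQ0p hy.1 (F1 i)
        by_cases hc2 : Sum.inr none ∈ Q0
        · -- every part of N is inside L2
          have : ∀ A ∈ N, (A ∩ L2).Nonempty := by
            intro A hAN
            obtain ⟨y, hy⟩ := π.nonempty_of_mem_parts (hNsub hAN)
            rcases hNmem A hAN y hy with h' | h'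
            · exfalso
              have := hL1Q0 A hAN ⟨y, Finset.mem_inter.mpr ⟨hy, h'⟩⟩
              rw [this] at hAN
              exact ((Finset.mem_filter.mp hAN).2).2 hc2
            · exact ⟨y, Finset.mem_inter.mpr ⟨hy, h'⟩⟩
          exact ((key N L2 hNsub this).trans_eq cardL2).trans hqp
        · -- c2 ∉ Q0 : N ⊆ {P0, Q0}
          have F2 : ∀ j : Fin q, Sum.inr (some j) ∈ P0 ∪ Q0 := by
            rcases g3 with h' | h'
            · rw [Finset.mem_union] at h'
              rcases h' with h' | h'
              · exact absurd h' hP0c2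
              · exact absurd h' hc2
            · exact h'
          have hNsub2 : N ⊆ {P0, Q0} := by
            intro A hAN
            obtain ⟨y, hy⟩ := π.nonempty_of_mem_parts (hNsub hAN)
            rw [Finset.mem_insert, Finset.mem_singleton]
            rcases hNmem A hAN y hy with h' | h'
            · exact Or.inr (hL1Q0 A hAN ⟨y, Finset.mem_inter.mpr ⟨hy, h'⟩⟩)
            · obtain ⟨j, rfl⟩ := (memL2 y).mp h'
              rcases Finset.mem_union.mp (F2 j) with h'' | h''
              · exact Or.inl (π.eq_of_mem_parts (hNsub hAN) hP0p hy h'')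
              · exact Or.inr (π.eq_of_mem_parts (hNsub hAN) hQ0p hy h'')
          calc N.card ≤ ({P0, Q0} : Finset (Finset W)).card := Finset.card_le_card hNsub2
            _ ≤ 2 := Finset.card_insert_le _ _ |>.trans (by simp)
            _ ≤ p := hp2
  -- combine
  obtain ⟨C1, hC1p, hC1⟩ := π.exists_mem (Finset.mem_univ (Sum.inl none : W))
  obtain ⟨C2, hC2p, hC2⟩ := π.exists_mem (Finset.mem_univ (Sum.inr none : W))
  have hsub : π.parts ⊆ insert C1 (insert C2 N) := by
    intro A hA
    rw [Finset.mem_insert, Finset.mem_insert]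
    by_cases h1 : Sum.inl none ∈ A
    · exact Or.inl (π.eq_of_mem_parts hA hC1p h1 hC1)
    · by_cases h2 : Sum.inr none ∈ A
      · exact Or.inr (Or.inl (π.eq_of_mem_parts hA hC2p h2 hC2))
      · exact Or.inr (Or.inr (Finset.mem_filter.mpr ⟨hA, h1, h2⟩))
  calc π.parts.card ≤ (insert C1 (insert C2 N)).card := Finset.card_le_card hsub
    _ ≤ (insert C2 N).card + 1 := Finset.card_insert_le _ _
    _ ≤ N.card + 1 + 1 := by
        have := Finset.card_insert_le C2 N
        omega
    _ ≤ p + 2 := by omega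

end GCAux

theorem gc_doubleStar (p q : ℕ) (hq : 1 ≤ q) (hpq : q ≤ p) (hne : ¬ (p = 1 ∧ q = 1)) :
    globalCoalitionNumber (doubleStar p q) = p + 2 := by
  have hp2 : 2 ≤ p := by
    rcases Nat.lt_or_ge p 2 with h | h
    · interval_cases p
      · omega
      · exact absurd ⟨rfl, le_antisymm hpq hq⟩ hne
    · exact h
  have hp : 1 ≤ p := le_trans (by norm_num) hp2
  obtain ⟨π0, hπ0, hcard0⟩ := lower hp hq
  have hmem : (p + 2) ∈ {n | ∃ π : Finpartition (Finset.univ :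
      Finset (Option (Fin p) ⊕ Option (Fin q))),
      IsGCPartition (doubleStar p q) π ∧ π.parts.card = n} := ⟨π0, hπ0, hcard0⟩
  have hub : ∀ n ∈ {n | ∃ π : Finpartition (Finset.univ :
      Finset (Option (Fin p) ⊕ Option (Fin q))),
      IsGCPartition (doubleStar p q) π ∧ π.parts.card = n}, n ≤ p + 2 := by
    rintro n ⟨π, hπ, rfl⟩
    exact upper hp2 hq hpq π hπ
  rw [globalCoalitionNumber]
  exact le_antisymm (csSup_le ⟨_, hmem⟩ hub) (le_csSup ⟨p + 2, fun n hn => hub n hn⟩ hmem)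
end

section
/- Let G be a finite connected simple graph whose girth is at least 6 (i.e., G contains a cycle and its shortest cycle has length at least 6). Then every dominating set of G is also a dominating set of the complement Ḡ. -/
open SimpleGraph Finset

variable {V : Type*} [Fintype V] [DecidableEq V]

section helpers
variable {W : Type*} {G : SimpleGraph W}

omit [Fintype V] [DecidableEq V]

lemma myGetVert_eq_getElem {u v : W} (p : G.Walk u v) (i : ℕ) (h : i ≤ p.length) :
    p.getVert i = p.support[i]'(by simp [Walk.length_support]; omega) := by
  induction p generalizing i with
  | nil =>
    have : i = 0 := by simpa using h
    subst this
    simp [Walk.getVert]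
  | cons hadj q ih =>
    cases i with
    | zero => simp [Walk.getVert]
    | succ n =>
      simp only [Walk.getVert_cons_succ, Walk.support_cons, List.getElem_cons_succ]
      exact ih n (by simpa [Walk.length_cons, Nat.succ_le_succ_iff] using h)

lemma myCycle_getVert_ne {v : W} {c : G.Walk v v} (hc : c.IsCycle) {i j : ℕ}
    (hi : 1 ≤ i) (hij : i < j) (hj : j ≤ c.length) : c.getVert i ≠ c.getVert j := by
  have hnd : c.support.tail.Nodup := hc.2
  rw [myGetVert_eq_getElem c i (by omega), myGetVert_eq_getElem c j hj]
  have hlen : c.support.length = c.length + 1 := c.length_support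
  have h1 : c.support[i]'(by omega) = c.support.tail[i-1]'(by simp [hlen]; omega) := by
    rw [List.getElem_tail]; congr 1; omega
  have h2 : c.support[j]'(by omega) = c.support.tail[j-1]'(by simp [hlen]; omega) := by
    rw [List.getElem_tail]; congr 1; omega
  rw [h1, h2]
  intro hEq
  have := (List.Nodup.getElem_inj_iff hnd).mp hEq
  omega

lemma myNoTri (h6 : ∀ (a : W) (w : G.Walk a a), w.IsCycle → 6 ≤ w.length)
    {a b c : W} (hab : G.Adj a b) (hbc : G.Adj b c) (hca : G.Adj c a) : False := by
  have n1 := hab.ne; have n2 := hbc.ne; have n3 := hca.ne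
  have n1' := hab.ne'; have n2' := hbc.ne'; have n3' := hca.ne'
  have hcy : (Walk.cons hab (Walk.cons hbc (Walk.cons hca Walk.nil))).IsCycle := by
    simp [Walk.isCycle_def, Walk.isTrail_def, Sym2.eq_iff] <;> tauto
  have := h6 a _ hcy
  simp at this

lemma myNoQuad (h6 : ∀ (a : W) (w : G.Walk a a), w.IsCycle → 6 ≤ w.length)
    {a b c d : W} (hab : G.Adj a b) (hbc : G.Adj b c) (hcd : G.Adj c d) (hda : G.Adj d a)
    (hac : a ≠ c) (hbd : b ≠ d) : False := by
  have n1 := hab.ne; have n2 := hbc.ne; have n3 := hcd.ne; have n4 := hda.ne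
  have n1' := hab.ne'; have n2' := hbc.ne'; have n3' := hcd.ne'; have n4' := hda.ne'
  have hac' := hac.symm; have hbd' := hbd.symm
  have hcy : (Walk.cons hab (Walk.cons hbc (Walk.cons hcd (Walk.cons hda Walk.nil)))).IsCycle := by
    simp [Walk.isCycle_def, Walk.isTrail_def, Sym2.eq_iff] <;> tauto
  have := h6 a _ hcy
  simp at this

lemma myNoPenta (h6 : ∀ (a : W) (w : G.Walk a a), w.IsCycle → 6 ≤ w.length)
    {a b c d e : W} (hab : G.Adj a b) (hbc : G.Adj b c) (hcd : G.Adj c d) (hde : G.Adj d e)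
    (hea : G.Adj e a) (hac : a ≠ c) (had : a ≠ d) (hbd : b ≠ d) (hbe : b ≠ e)
    (hce : c ≠ e) : False := by
  have n1 := hab.ne; have n2 := hbc.ne; have n3 := hcd.ne; have n4 := hde.ne
  have n5 := hea.ne
  have n1' := hab.ne'; have n2' := hbc.ne'; have n3' := hcd.ne'; have n4' := hde.ne'
  have n5' := hea.ne'
  have h1 := hac.symm; have h2 := had.symm; have h3 := hbd.symm; have h4 := hbe.symm
  have h5 := hce.symm
  have hcy : (Walk.cons hab (Walk.cons hbc (Walk.cons hcd (Walk.cons hde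
      (Walk.cons hea Walk.nil))))).IsCycle := by
    simp [Walk.isCycle_def, Walk.isTrail_def, Sym2.eq_iff] <;> tauto
  have := h6 a _ hcy
  simp at this

end helpers

theorem domSet_compl_of_girth_ge_six (G : SimpleGraph V) (hc : G.Connected)
    (hcyc : ¬ G.IsAcyclic) (hg : 6 ≤ G.girth) (S : Finset V) (hS : IsDomSet G S) :
    IsDomSet Gᶜ S := by
  intro v
  by_cases hv : v ∈ S
  · exact Or.inl hv
  refine Or.inr ?_
  by_contra hcon
  push_neg at hcon
  -- every vertex of S is adjacent to v in G
  have HA : ∀ u ∈ S, G.Adj v u := by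
    intro u hu
    have h1 := hcon u hu
    rw [compl_adj] at h1
    push_neg at h1
    have hne : u ≠ v := fun h => hv (h ▸ hu)
    exact (h1 hne).symm
  -- every cycle has length at least 6
  have h6 : ∀ (a : V) (w : G.Walk a a), w.IsCycle → 6 ≤ w.length := by
    intro a w hw
    have htop : G.egirth ≠ ⊤ := egirth_eq_top.not.mpr hcyc
    have he : (6 : ℕ∞) ≤ G.egirth := by
      rw [← ENat.coe_toNat htop]
      exact_mod_cast hg
    have := le_egirth.mp he a w hw
    exact_mod_cast this
  -- no edges inside the neighborhood of v
  have hAA : ∀ a1 a2 : V, G.Adj v a1 → G.Adj v a2 → ¬ G.Adj a1 a2 := by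
    intro a1 a2 h1 h2 h12
    exact myNoTri h6 h1 h12 h2.symm
  -- every non-neighbor of v has a common neighbor with v
  have hBdom : ∀ x : V, ¬ G.Adj v x → x ≠ v → ∃ s, G.Adj v s ∧ G.Adj s x := by
    intro x hx hxv
    rcases hS x with h | ⟨s, hs, hsx⟩
    · exact absurd (HA x h) hx
    · exact ⟨s, HA s hs, hsx⟩
  -- no edges between non-neighbors of v
  have hBB : ∀ b1 b2 : V, ¬ G.Adj v b1 → b1 ≠ v → ¬ G.Adj v b2 → b2 ≠ v →
      ¬ G.Adj b1 b2 := by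
    intro b1 b2 h1 h1v h2 h2v h12
    obtain ⟨s1, hvs1, hs1b⟩ := hBdom b1 h1 h1v
    obtain ⟨s2, hvs2, hs2b⟩ := hBdom b2 h2 h2v
    by_cases hs : s1 = s2
    · subst hs
      exact myNoTri h6 hs1b h12 hs2b.symm
    · exact myNoPenta h6 hvs1 hs1b h12 hs2b.symm hvs2.symm
        (Ne.symm h1v) (Ne.symm h2v)
        (fun h => h2 (h ▸ hvs1)) hs (fun h => h1 (by rwa [← h] at hvs2))
  -- a path of 4 vertices avoiding v is impossible
  have key : ∀ y1 y2 y3 y4 : V, y1 ≠ v → y2 ≠ v → y3 ≠ v → y4 ≠ v → y1 ≠ y3 → y2 ≠ y4 →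
      G.Adj y1 y2 → G.Adj y2 y3 → G.Adj y3 y4 → False := by
    intro y1 y2 y3 y4 h1v h2v h3v h4v h13 h24 e12 e23 e34
    by_cases h2 : G.Adj v y2
    · have h3 : ¬ G.Adj v y3 := fun h => hAA y2 y3 h2 h e23
      have h4 : G.Adj v y4 := by
        by_contra h4
        exact hBB y3 y4 h3 h3v h4 h4v e34
      exact myNoQuad h6 h2 e23 e34 h4.symm (Ne.symm h3v) h24
    · have h1 : G.Adj v y1 := by
        by_contra h1
        exact hBB y1 y2 h1 h1v h2 h2v e12
      have h3 : G.Adj v y3 := by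
        by_contra h3
        exact hBB y2 y3 h2 h2v h3 h3v e23
      exact myNoQuad h6 h1 e12 e23 h3.symm (Ne.symm h2v) h13
  -- take a shortest cycle
  obtain ⟨a, w, hw, hlen⟩ := exists_girth_eq_length.mpr hcyc
  have hL : 6 ≤ w.length := hlen ▸ hg
  by_cases hmem : v ∈ w.support
  · -- rotate the cycle to start at v
    set c := w.rotate v hmem with hcdef
    have hcC : c.IsCycle := hw.rotate hmem
    have hcl : c.length = w.length := by
      have hperm := (Walk.rotate_darts w v hmem).perm.length_eq
      rw [← Walk.length_darts, ← Walk.length_darts]; exact hperm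
    have hL' : 6 ≤ c.length := hcl ▸ hL
    have hne_v : ∀ i, 1 ≤ i → i < c.length → c.getVert i ≠ v := by
      intro i hi1 hi2
      have := myCycle_getVert_ne hcC hi1 hi2 (le_refl c.length)
      simpa [Walk.getVert_length] using this
    exact key (c.getVert 1) (c.getVert 2) (c.getVert 3) (c.getVert 4)
      (hne_v 1 (by omega) (by omega)) (hne_v 2 (by omega) (by omega))
      (hne_v 3 (by omega) (by omega)) (hne_v 4 (by omega) (by omega))
      (myCycle_getVert_ne hcC (by omega) (by omega) (by omega))
      (myCycle_getVert_ne hcC (by omega) (by omega) (by omega))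
      (c.adj_getVert_succ (by omega)) (c.adj_getVert_succ (by omega))
      (c.adj_getVert_succ (by omega))
  · have hne_v : ∀ i, i ≤ w.length → w.getVert i ≠ v := by
      intro i hi h
      exact hmem (by rw [← h]; exact Walk.mem_support_iff_exists_getVert.mpr ⟨i, rfl, hi⟩)
    have h02 : w.getVert 0 ≠ w.getVert 2 := by
      have := myCycle_getVert_ne hw (i := 2) (j := w.length) (by omega) (by omega) le_rfl
      rw [Walk.getVert_length] at this
      rw [Walk.getVert_zero]
      exact fun h => this (by rw [← h])
    exact key (w.getVert 0) (w.getVert 1) (w.getVert 2) (w.getVert 3)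
      (hne_v 0 (by omega)) (hne_v 1 (by omega)) (hne_v 2 (by omega)) (hne_v 3 (by omega))
      h02 (myCycle_getVert_ne hw (by omega) (by omega) (by omega))
      (w.adj_getVert_succ (by omega)) (w.adj_getVert_succ (by omega))
      (w.adj_getVert_succ (by omega))
end

section
/- If G is a finite connected simple graph with girth at least 6 (i.e., G contains a cycle and its shortest cycle has length at least 6), then GC(G) = C(G). -/
open SimpleGraph Finset

variable {V : Type*} [Fintype V] [DecidableEq V]

section GCHelpers

variable {W : Type*} {G' : SimpleGraph W}

lemma myGetVertSupport {u v : W} (p : G'.Walk u v) (i : ℕ) (h : i ≤ p.length) :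
    p.support[i]? = some (p.getVert i) := by
  induction p generalizing i with
  | nil =>
    have : i = 0 := by simpa using h
    subst this; simp
  | cons hadj q ih =>
    cases i with
    | zero => simp
    | succ n =>
      rw [Walk.getVert_cons_succ, Walk.support_cons, List.getElem?_cons_succ]
      exact ih n (by simpa using h)

lemma myCycInj {a : W} {w : G'.Walk a a} (hw : w.IsCycle) {i j : ℕ}
    (hi1 : 1 ≤ i) (hi : i ≤ w.length) (hj1 : 1 ≤ j) (hj : j ≤ w.length)
    (hij : w.getVert i = w.getVert j) : i = j := by
  have hlen : w.support.tail.length = w.length := by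
    simp [SimpleGraph.Walk.length_support]
  have hnd : w.support.tail.Nodup := hw.2
  have key : ∀ k, 1 ≤ k → k ≤ w.length → w.support.tail[k-1]? = some (w.getVert k) := by
    intro k hk1 hk
    rcases Nat.exists_eq_add_of_le hk1 with ⟨m, hm⟩
    have hm' : k = m + 1 := by omega
    subst hm'
    have := myGetVertSupport w (m+1) hk
    rw [w.support_eq_cons, List.getElem?_cons_succ] at this
    simpa using this
  have h1 := key i hi1 hi
  have h2 := key j hj1 hj
  rw [hij, ← h2] at h1
  have := (List.getElem?_inj (by omega) hnd).mp h1
  omega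

lemma myShortCycleFalse (hg : 6 ≤ G'.girth) {a : W} (w : G'.Walk a a)
    (hw : w.IsCycle) (hlen : w.length ≤ 5) : False := by
  have h1 : G'.egirth ≤ w.length := le_egirth.mp le_rfl a w hw
  have h2 : G'.egirth ≤ (5 : ℕ) := h1.trans (by exact_mod_cast Nat.cast_le.mpr hlen)
  have h3 : G'.girth ≤ 5 := by
    have := ENat.toNat_le_toNat h2 (by simp)
    simpa [SimpleGraph.girth] using this
  omega

lemma myNoTriangle (hg : 6 ≤ G'.girth) {a b c : W} (hab : G'.Adj a b) (hbc : G'.Adj b c)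
    (hca : G'.Adj c a) : False := by
  refine myShortCycleFalse hg (Walk.cons hab (Walk.cons hbc (Walk.cons hca Walk.nil))) ?_ (by simp)
  have := hab.ne; have := hbc.ne; have := hca.ne
  simp [Walk.isCycle_def, Walk.isTrail_def, List.nodup_cons, Sym2.eq_iff]
  aesop

lemma myNoC4 (hg : 6 ≤ G'.girth) {a b c d : W} (hab : G'.Adj a b) (hbc : G'.Adj b c)
    (hcd : G'.Adj c d) (hda : G'.Adj d a) (hac : a ≠ c) (hbd : b ≠ d) : False := by
  refine myShortCycleFalse hg
    (Walk.cons hab (Walk.cons hbc (Walk.cons hcd (Walk.cons hda Walk.nil)))) ?_ (by simp)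
  have := hab.ne; have := hbc.ne; have := hcd.ne; have := hda.ne
  simp [Walk.isCycle_def, Walk.isTrail_def, List.nodup_cons, Sym2.eq_iff]
  aesop

lemma myNoC5 (hg : 6 ≤ G'.girth) {a b c d e : W} (hab : G'.Adj a b) (hbc : G'.Adj b c)
    (hcd : G'.Adj c d) (hde : G'.Adj d e) (hea : G'.Adj e a)
    (hac : a ≠ c) (had : a ≠ d) (hbd : b ≠ d) (hbe : b ≠ e) (hce : c ≠ e) : False := by
  refine myShortCycleFalse hg
    (Walk.cons hab (Walk.cons hbc (Walk.cons hcd (Walk.cons hde (Walk.cons hea Walk.nil)))))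
    ?_ (by simp)
  have := hab.ne; have := hbc.ne; have := hcd.ne; have := hde.ne; have := hea.ne
  simp [Walk.isCycle_def, Walk.isTrail_def, List.nodup_cons, Sym2.eq_iff]
  aesop

/-- In a graph with girth at least 6 containing a cycle, every vertex has some vertex
at distance at least 3 from it. -/
lemma myExistsFar (hcyc : ¬ G'.IsAcyclic) (hg : 6 ≤ G'.girth) (v : W) :
    ∃ w : W, w ≠ v ∧ ¬ G'.Adj v w ∧ ∀ u, G'.Adj v u → ¬ G'.Adj u w := by
  by_contra hcon
  push_neg at hcon
  have h : ∀ w : W, w ≠ v → ¬ G'.Adj v w → ∃ u, G'.Adj v u ∧ G'.Adj u w := hcon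
  -- no vertex in B := {b | b ≠ v ∧ ¬ Adj v b} has two distinct neighbors
  have hA2 : ∀ x y b : W, G'.Adj v x → G'.Adj v y → x ≠ y → b ≠ v →
      G'.Adj x b → G'.Adj y b → False := by
    intro x y b hvx hvy hxy hbv hxb hyb
    exact myNoC4 hg hvx hxb hyb.symm hvy.symm (fun hvb => hbv hvb.symm) hxy
  have hM : ∀ b : W, b ≠ v → ¬ G'.Adj v b → ∀ z, G'.Adj b z → G'.Adj v z := by
    intro b hbv hvb z hbz
    have hzv : z ≠ v := by rintro rfl; exact hvb hbz.symm
    by_contra hvz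
    obtain ⟨x, hvx, hxb⟩ := h b hbv hvb
    obtain ⟨x', hvx', hx'z⟩ := h z hzv hvz
    by_cases hxx : x = x'
    · subst hxx
      exact myNoTriangle hg hxb hbz hx'z.symm
    · refine myNoC5 hg hvx hxb hbz hx'z.symm hvx'.symm ?_ ?_ ?_ hxx ?_
      · exact fun hc => hbv hc.symm
      · exact fun hc => hzv hc.symm
      · rintro rfl; exact hvz hvx
      · rintro rfl; exact hvb hvx'
  have hN : ∀ b p r : W, b ≠ v → ¬ G'.Adj v b → G'.Adj b p → G'.Adj b r → p ≠ r → False := by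
    intro b p r hbv hvb hbp hbr hpr
    exact hA2 p r b (hM b hbv hvb p hbp) (hM b hbv hvb r hbr) hpr hbv hbp.symm hbr.symm
  -- take the girth cycle
  obtain ⟨a, w, hw, hglen⟩ := exists_girth_eq_length.mpr hcyc
  have hlen : 6 ≤ w.length := hglen ▸ hg
  set c : ℕ → W := w.getVert with hc
  have adj : ∀ i, i + 1 ≤ 6 → G'.Adj (c i) (c (i+1)) := fun i hi =>
    w.adj_getVert_succ (by omega)
  have dst : ∀ i j, 1 ≤ i → i < j → j ≤ 6 → c i ≠ c j := by
    intro i j h1 h2 h3 hEq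
    have := myCycInj hw (by omega) (by omega) (by omega) (by omega) hEq
    omega
  by_cases h3v : c 3 = v
  · -- v is on the cycle at position 3
    have hv4 : G'.Adj v (c 4) := h3v ▸ adj 3 (by omega)
    have h5v : c 5 ≠ v := h3v ▸ (dst 3 5 (by omega) (by omega) (by omega)).symm
    have h5a : ¬ G'.Adj v (c 5) := fun hv5 => myNoTriangle hg hv4 (adj 4 (by omega)) hv5.symm
    exact hN (c 5) (c 4) (c 6) h5v h5a (adj 4 (by omega)).symm (adj 5 (by omega))
      (dst 4 6 (by omega) (by omega) (by omega))
  · by_cases h3a : G'.Adj v (c 3)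
    · by_cases h4v : c 4 = v
      · have h2v : c 2 ≠ v := h4v ▸ dst 2 4 (by omega) (by omega) (by omega)
        have h2a : ¬ G'.Adj v (c 2) := fun hv2 =>
          myNoTriangle hg hv2 (adj 2 (by omega)) h3a.symm
        exact hN (c 2) (c 1) (c 3) h2v h2a (adj 1 (by omega)).symm (adj 2 (by omega))
          (dst 1 3 (by omega) (by omega) (by omega))
      · have h4a : ¬ G'.Adj v (c 4) := fun hv4 =>
          myNoTriangle hg h3a (adj 3 (by omega)) hv4.symm
        exact hN (c 4) (c 3) (c 5) h4v h4a (adj 3 (by omega)).symm (adj 4 (by omega))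
          (dst 3 5 (by omega) (by omega) (by omega))
    · exact hN (c 3) (c 2) (c 4) h3v h3a (adj 2 (by omega)).symm (adj 3 (by omega))
        (dst 2 4 (by omega) (by omega) (by omega))

end GCHelpers

section GCMain

variable {V : Type*} [Fintype V] [DecidableEq V]

lemma myDomCompl {G : SimpleGraph V}
    (far : ∀ v : V, ∃ w : V, w ≠ v ∧ ¬ G.Adj v w ∧ ∀ u, G.Adj v u → ¬ G.Adj u w)
    {S : Finset V} (hS : IsDomSet G S) : IsDomSet Gᶜ S := by
  intro v
  by_cases hv : v ∈ S
  · exact Or.inl hv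
  obtain ⟨w, hwv, hvw, hfar⟩ := far v
  right
  rcases hS w with hw | ⟨u, hu, huw⟩
  · exact ⟨w, hw, (G.compl_adj w v).mpr ⟨hwv, fun hadj => hvw hadj.symm⟩⟩
  · refine ⟨u, hu, (G.compl_adj u v).mpr ⟨?_, ?_⟩⟩
    · rintro rfl; exact hvw huw
    · intro huv; exact hfar u huv.symm huw

lemma myGlobalIff {G : SimpleGraph V}
    (far : ∀ v : V, ∃ w : V, w ≠ v ∧ ¬ G.Adj v w ∧ ∀ u, G.Adj v u → ¬ G.Adj u w)
    (S : Finset V) : IsGlobalDomSet G S ↔ IsDomSet G S :=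
  ⟨fun h => h.1, fun h => ⟨h, myDomCompl far h⟩⟩

lemma myNoSingletonDom {G : SimpleGraph V}
    (far : ∀ v : V, ∃ w : V, w ≠ v ∧ ¬ G.Adj v w ∧ ∀ u, G.Adj v u → ¬ G.Adj u w)
    (u : V) : ¬ IsDomSet G ({u} : Finset V) := by
  intro hd
  obtain ⟨w, hwu, huw, _⟩ := far u
  rcases hd w with hw | ⟨x, hx, hxw⟩
  · exact hwu (Finset.mem_singleton.mp hw)
  · rw [Finset.mem_singleton] at hx
    subst hx
    exact huw hxw

lemma myPartitionIff {G : SimpleGraph V}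
    (far : ∀ v : V, ∃ w : V, w ≠ v ∧ ¬ G.Adj v w ∧ ∀ u, G.Adj v u → ¬ G.Adj u w)
    (π : Finpartition (Finset.univ : Finset V)) :
    IsGCPartition G π ↔ IsCoalitionPartition G π := by
  constructor
  · intro hπ A hA
    obtain ⟨hnA, B, hB, hBA, hdisj, h1, h2, h3⟩ := hπ A hA
    refine Or.inr ⟨fun hd => hnA ((myGlobalIff far A).mpr hd), B, hB, hBA, hdisj,
      fun hd => h1 ((myGlobalIff far A).mpr hd),
      fun hd => h2 ((myGlobalIff far B).mpr hd), h3.1⟩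
  · intro hπ A hA
    rcases hπ A hA with ⟨u, hAu, hd⟩ | ⟨hnd, B, hB, hBA, hdisj, h1, h2, h3⟩
    · exact absurd (hAu ▸ hd) (myNoSingletonDom far u)
    · refine ⟨fun hG => hnd hG.1, B, hB, hBA, hdisj,
        fun hG => h1 hG.1, fun hG => h2 hG.1, (myGlobalIff far _).mpr h3⟩

end GCMain

theorem gc_eq_c_of_girth_ge_six (G : SimpleGraph V) (hc : G.Connected)
    (hcyc : ¬ G.IsAcyclic) (hg : 6 ≤ G.girth) :
    globalCoalitionNumber G = coalitionNumber G := by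
  have far : ∀ v : V, ∃ w : V, w ≠ v ∧ ¬ G.Adj v w ∧ ∀ u, G.Adj v u → ¬ G.Adj u w :=
    myExistsFar hcyc hg
  unfold globalCoalitionNumber coalitionNumber
  congr 1
  ext n
  constructor
  · rintro ⟨π, hπ, hcard⟩
    exact ⟨π, (myPartitionIff far π).mp hπ, hcard⟩
  · rintro ⟨π, hπ, hcard⟩
    exact ⟨π, (myPartitionIff far π).mpr hπ, hcard⟩
end
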